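/- arXiv:math/0101177 — 8 statements merged into one kernel-verified Lean document; each statement's English description precedes it below -/
import Mathlib

section
/- Let A be a unital *-algebra over ℂ, let q ∈ ℂ, let π be a real number with π ≠ 0 and π ≠ −1, and let t, α, β ∈ A with t* = t and α ≠ 0. Let Q = [[α, β], [−q·β*, π·α*]] ∈ Mat₂(A). If diag(t, π·t)·Q + Q·diag((2/(1+π))·1 − t, π·((2/(1+π))·1 − t)) = Q, then π = 1 and t commutes with each of α, α*, β, β*. -/
/-- Let `π` be real, `π ≠ 0`, `π ≠ -1`, `t` self-adjoint, `α ≠ 0`,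
and `Q = [[α, β], [-q·β*, π·α*]]`.  If
`diag(t, π·t)·Q + Q·diag((2/(1+π))·1 - t, π·((2/(1+π))·1 - t)) = Q`,
then `π = 1` and `t` commutes with each of `α, α*, β, β*`. -/
theorem idempotent_diagonal_constraint {A : Type*} [Ring A] [Algebra ℂ A] [StarRing A]
    [StarModule ℂ A] (q : ℂ) (π : ℝ) (hπ0 : π ≠ 0) (hπ1 : π ≠ -1)
    (t α β : A) (ht : star t = t) (hα : α ≠ 0)
    (Q D₁ D₂ : Matrix (Fin 2) (Fin 2) A)
    (hQ : Q = !![α, β; -(q • star β), (π : ℂ) • star α])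
    (hD1 : D₁ = !![t, 0; 0, (π : ℂ) • t])
    (hD2 : D₂ = !![((2 / (1 + π) : ℝ) : ℂ) • (1 : A) - t, 0;
                   0, (π : ℂ) • (((2 / (1 + π) : ℝ) : ℂ) • (1 : A) - t)])
    (heq : D₁ * Q + Q * D₂ = Q) :
    π = 1 ∧ Commute t α ∧ Commute t (star α) ∧ Commute t β ∧ Commute t (star β) := by
  subst hQ hD1 hD2
  have h1π : (1:ℝ) + π ≠ 0 := fun h => hπ1 (by linarith)
  set c : ℂ := ((2 / (1 + π) : ℝ) : ℂ) with hc
  have hsc : star c = c := by rw [hc, Complex.star_def, Complex.conj_ofReal]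
  have h00 : t*α + α*(c•(1:A) - t) = α := by
    have := congrFun (congrFun heq 0) 0
    simpa [Matrix.mul_apply, Fin.sum_univ_two] using this
  have h01 : t*β + β*((π:ℂ)•(c•(1:A) - t)) = β := by
    have := congrFun (congrFun heq 0) 1
    simpa [Matrix.mul_apply, Fin.sum_univ_two] using this
  have h11 : ((π:ℂ)•t) * ((π:ℂ)•star α) + ((π:ℂ)•star α) * ((π:ℂ)•(c•(1:A) - t)) = (π:ℂ)•star α := by
    have := congrFun (congrFun heq 1) 1
    simpa [Matrix.mul_apply, Fin.sum_univ_two] using this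
  -- E0
  have E0 : t*α - α*t = ((1:ℂ)-c)•α := by
    rw [mul_sub, mul_smul_comm, mul_one] at h00
    linear_combination (norm := module) h00
  have E1 : t*(star α) - (star α)*t = (c-(1:ℂ))•(star α) := by
    have h := congrArg star E0
    simp only [star_sub, star_mul, ht, star_smul, hsc, star_sub, star_one] at h
    linear_combination (norm := module) -h
  -- normalize h11
  simp only [smul_sub, smul_smul, mul_sub, mul_smul_comm, smul_mul_assoc, mul_one] at h11
  have key : (((π:ℂ)*(π:ℂ))*(2*c-1) - (π:ℂ)) • (star α) = 0 := by
    linear_combination (norm := module) h11 - ((π:ℂ)*(π:ℂ)) • E1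
  have hπeq : π = 1 := by
    by_contra hne
    have hs : (((π:ℂ)*(π:ℂ))*(2*c-1) - (π:ℂ)) ≠ 0 := by
      rw [hc]
      have : ((π*π*(2*(2/(1+π))-1) - π : ℝ) : ℂ) = ((π:ℂ)*(π:ℂ))*(2*((2/(1+π):ℝ):ℂ)-1) - (π:ℂ) := by
        push_cast; ring
      rw [← this]
      rw [ne_eq, Complex.ofReal_eq_zero]
      intro h
      apply hne
      have h2 : π*(π-1)^2 = 0 := by field_simp at h; nlinarith [h]
      have h3 : (π-1)^2 = 0 := by
        rcases mul_eq_zero.mp h2 with h' | h'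
        · exact absurd h' hπ0
        · exact h'
      have := pow_eq_zero_iff (n := 2) (by norm_num) |>.mp h3
      linarith
    apply hα
    have hsα : star α = 0 := by
      have := congrArg (fun x => (((π:ℂ)*(π:ℂ))*(2*c-1) - (π:ℂ))⁻¹ • x) key
      simpa [smul_smul, inv_mul_cancel₀ hs] using this
    simpa using congrArg star hsα
  subst hπeq
  have hc1 : c = 1 := by rw [hc]; norm_num
  rw [hc1] at E0 E1 h01
  have C1 : Commute t α := by
    have : t*α - α*t = 0 := by rw [E0]; simp
    exact sub_eq_zero.mp this
  have C2 : Commute t (star α) := by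
    have : t*(star α) - (star α)*t = 0 := by rw [E1]; simp
    exact sub_eq_zero.mp this
  have C3 : Commute t β := by
    simp only [Complex.ofReal_one, one_smul, mul_sub, mul_smul_comm, mul_one] at h01
    have : t*β - β*t = 0 := by linear_combination (norm := module) h01
    exact sub_eq_zero.mp this
  have C4 : Commute t (star β) := by
    have h := congrArg star C3.eq
    simp only [star_mul, ht] at h
    exact h.symm
  exact ⟨rfl, C1, C2, C3, C4⟩
end

section
/- Let A be a unital *-algebra over ℂ, q ∈ ℂ, and α, β, z ∈ A with z* = z. Define e ∈ Mat₄(A) by e = (1/2)·[[1+z, 0, α, β], [0, 1+z, −q·β*, α*], [α*, −conj(q)·β, 1−z, 0], [β*, α, 0, 1−z]]. Then e is self-adjoint (e equals its conjugate transpose), and e² = e if and only if the elements satisfy: zα = αz, zβ = βz, βα = conj(q)·αβ, β*α = q·αβ*, ββ* = β*β, α*α + |q|²·β*β + z² = 1, and αα* + ββ* + z² = 1, where |q|² = q·conj(q). -/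
set_option maxHeartbeats 1000000 in
/-- With `z* = z`, the matrix
`e = (1/2)·[[1+z, 0, α, β], [0, 1+z, -q·β*, α*], [α*, -conj(q)·β, 1-z, 0], [β*, α, 0, 1-z]]`
is self-adjoint, and `e² = e` iff the generators satisfy the sphere relations (s4rel):
`zα = αz`, `zβ = βz`, `βα = conj(q)·αβ`, `β*α = q·αβ*`, `ββ* = β*β`,
`α*α + |q|²·β*β + z² = 1`, `αα* + ββ* + z² = 1`. -/
theorem instanton_projection_iff_s4rel {A : Type*} [Ring A] [Algebra ℂ A] [StarRing A]
    [StarModule ℂ A] (q : ℂ) (α β z : A) (hz : star z = z)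
    (e : Matrix (Fin 4) (Fin 4) A)
    (he : e = (2⁻¹ : ℂ) •
      !![1 + z, 0, α, β;
         0, 1 + z, -(q • star β), star α;
         star α, -((starRingEnd ℂ) q • β), 1 - z, 0;
         star β, α, 0, 1 - z]) :
    e.conjTranspose = e ∧
      (e * e = e ↔
        (z * α = α * z ∧ z * β = β * z ∧
          β * α = (starRingEnd ℂ) q • (α * β) ∧
          star β * α = q • (α * star β) ∧
          β * star β = star β * β ∧
          star α * α + (q * (starRingEnd ℂ) q) • (star β * β) + z ^ 2 = 1 ∧
          α * star α + β * star β + z ^ 2 = 1)) := by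
  subst he
  set M : Matrix (Fin 4) (Fin 4) A :=
    !![1 + z, 0, α, β;
       0, 1 + z, -(q • star β), star α;
       star α, -((starRingEnd ℂ) q • β), 1 - z, 0;
       star β, α, 0, 1 - z] with hM
  constructor
  · ext i j
    fin_cases i <;> fin_cases j <;>
      simp [hM, Matrix.conjTranspose_apply, hz, star_smul]
  · have hred : ((2⁻¹ : ℂ) • M) * ((2⁻¹ : ℂ) • M) = (2⁻¹ : ℂ) • M ↔
        M * M = (2 : ℂ) • M := by
      rw [Matrix.smul_mul, Matrix.mul_smul, smul_smul]
      constructor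
      · intro h
        have := congrArg (fun N => ((4:ℂ)) • N) h
        simp only [smul_smul] at this
        norm_num at this
        exact this
      · intro h
        rw [h, smul_smul]
        norm_num
    rw [hred]
    constructor
    · intro h
      have h02 := congrFun (congrFun h 0) 2
      have h03 := congrFun (congrFun h 0) 3
      have h01 := congrFun (congrFun h 0) 1
      have h32 := congrFun (congrFun h 3) 2
      have h00 := congrFun (congrFun h 0) 0
      have h11 := congrFun (congrFun h 1) 1
      have h33 := congrFun (congrFun h 3) 3
      simp only [hM] at h02 h03 h01 h32 h00 h11 h33
      simp [Matrix.mul_apply, Fin.sum_univ_four,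
        mul_add, add_mul, mul_sub, sub_mul, mul_one, one_mul,
        mul_smul_comm, smul_mul_assoc, smul_smul, two_smul]
        at h02 h03 h01 h32 h00 h11 h33
      have r1 : z * α = α * z := by
        refine sub_eq_zero.mp ?_
        calc z * α - α * z = (α + z * α + (α - α * z)) - (α + α) := by abel
          _ = 0 := by rw [h02]; abel
      have r2 : z * β = β * z := by
        refine sub_eq_zero.mp ?_
        calc z * β - β * z = (β + z * β + (β - β * z)) - (β + β) := by abel
          _ = 0 := by rw [h03]; abel
      have r3 : β * α = (starRingEnd ℂ) q • (α * β) := by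
        refine sub_eq_zero.mp ?_
        calc β * α - (starRingEnd ℂ) q • (α * β)
            = -((starRingEnd ℂ) q • (α * β)) + β * α := by abel
          _ = 0 := h01
      have r4 : star β * α = q • (α * star β) := by
        refine sub_eq_zero.mp ?_
        calc star β * α - q • (α * star β)
            = star β * α + -(q • (α * star β)) := by abel
          _ = 0 := h32
      have r7 : α * star α + β * star β + z ^ 2 = 1 := by
        refine sub_eq_zero.mp ?_
        calc α * star α + β * star β + z ^ 2 - 1
            = (1 + z + (z + z * z) + α * star α + β * star β) - (1 + 1 + (z + z)) := by
              rw [pow_two]; abel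
          _ = 0 := by rw [h00]; abel
      have r6 : star α * α + (q * (starRingEnd ℂ) q) • (star β * β) + z ^ 2 = 1 := by
        refine sub_eq_zero.mp ?_
        calc star α * α + (q * (starRingEnd ℂ) q) • (star β * β) + z ^ 2 - 1
            = (1 + z + (z + z * z) + ((starRingEnd ℂ) q * q) • (star β * β) + star α * α)
              - (1 + 1 + (z + z)) := by
              rw [pow_two, mul_comm q ((starRingEnd ℂ) q)]; abel
          _ = 0 := by rw [h11]; abel
      have r7b : star β * β + α * star α + z ^ 2 = 1 := by
        refine sub_eq_zero.mp ?_
        calc star β * β + α * star α + z ^ 2 - 1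
            = (star β * β + α * star α + (1 - z - (z - z * z))) - (1 - z + (1 - z)) := by
              rw [pow_two]; abel
          _ = 0 := by rw [h33]; abel
      have r5 : β * star β = star β * β := by
        refine sub_eq_zero.mp ?_
        calc β * star β - star β * β
            = (α * star α + β * star β + z ^ 2) - (star β * β + α * star α + z ^ 2) := by abel
          _ = 1 - 1 := by rw [r7, r7b]
          _ = 0 := by norm_num
      exact ⟨r1, r2, r3, r4, r5, r6, r7⟩
    · rintro ⟨h1, h2, h3, h4, h5, h6, h7⟩
      have dz1 : z * star α = star α * z := by
        have := congrArg star h1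
        simp only [star_mul, hz] at this
        exact this.symm
      have dz2 : z * star β = star β * z := by
        have := congrArg star h2
        simp only [star_mul, hz] at this
        exact this.symm
      have d3 : star α * star β = q • (star β * star α) := by
        have := congrArg star h3
        simpa [star_smul, star_mul] using this
      have d4 : star α * β = (starRingEnd ℂ) q • (β * star α) := by
        have := congrArg star h4
        simpa [star_smul, star_mul] using this
      rw [pow_two] at h6 h7
      ext i j
      fin_cases i <;> fin_cases j <;>
        simp [hM, Matrix.mul_apply, Fin.sum_univ_four,
          mul_add, add_mul, mul_sub, sub_mul, mul_one, one_mul,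
          mul_smul_comm, smul_mul_assoc, smul_add, smul_sub, two_smul]
      · calc 1 + z + (z + z * z) + α * star α + β * star β
            = (α * star α + β * star β + z * z) + (1 + z + z) := by abel
          _ = 1 + (1 + z + z) := by rw [h7]
          _ = 1 + 1 + (z + z) := by abel
      · rw [h3]; abel
      · rw [h1]; abel
      · rw [h2]; abel
      · rw [d3]; abel
      · rw [smul_smul, mul_comm ((starRingEnd ℂ) q) q]
        calc 1 + z + (z + z * z) + (q * (starRingEnd ℂ) q) • (star β * β) + star α * α
            = (star α * α + (q * (starRingEnd ℂ) q) • (star β * β) + z * z) + (1 + z + z) := by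
              abel
          _ = 1 + (1 + z + z) := by rw [h6]
          _ = 1 + 1 + (z + z) := by abel
      · rw [dz2]; abel
      · rw [dz1]; abel
      · rw [dz1]; abel
      · rw [h2]; abel
      · rw [smul_smul, h5]
        calc star α * α + (q * (starRingEnd ℂ) q) • (star β * β) + (1 - z - (z - z * z))
            = (star α * α + (q * (starRingEnd ℂ) q) • (star β * β) + z * z) + (1 - z - z) := by
              abel
          _ = 1 + (1 - z - z) := by rw [h6]
          _ = 1 + 1 - (z + z) := by abel
      · rw [d4]; abel
      · rw [dz2]; abel
      · rw [h1]; abel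
      · rw [h4]; abel
      · rw [← h5]
        calc β * star β + α * star α + (1 - z - (z - z * z))
            = (α * star α + β * star β + z * z) + (1 - z - z) := by abel
          _ = 1 + (1 - z - z) := by rw [h7]
          _ = 1 + 1 - (z + z) := by abel
end

section
/- Let q ∈ ℂ with q ≠ 0, and suppose α, β, z are elements of a unital *-algebra A over ℂ satisfying the relations (s4rel) with parameter q. Then the elements α' = α*, β' = −q·β, z' = z satisfy the relations (s4rel) with parameter 1/q. Consequently, there is a unital *-algebra isomorphism Φ: A_{1/q} → A_q determined on generators by Φ(α) = α*, Φ(β) = −q·β, Φ(z) = z. -/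
/-- The relations (s4rel) defining the quantum 4-sphere `S⁴_q`:
`z* = z`, `zα = αz`, `zβ = βz`, `βα = conj(q)·αβ`, `β*α = q·αβ*`, `ββ* = β*β`,
`α*α + |q|²·β*β + z² = 1`, `αα* + ββ* + z² = 1`, where `|q|² = q·conj q`. -/
def S4Rel {A : Type*} [Ring A] [Algebra ℂ A] [StarRing A] [StarModule ℂ A]
    (q : ℂ) (α β z : A) : Prop :=
  star z = z ∧ z * α = α * z ∧ z * β = β * z ∧
    β * α = (starRingEnd ℂ) q • (α * β) ∧
    star β * α = q • (α * star β) ∧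
    β * star β = star β * β ∧
    star α * α + (q * (starRingEnd ℂ) q) • (star β * β) + z ^ 2 = 1 ∧
    α * star α + β * star β + z ^ 2 = 1

/-- `A` (with marked elements `α, β, z`) is *the* universal unital complex *-algebra on
generators `α, β, z` subject to the relations (s4rel) with parameter `q`, i.e. the
algebra `A_q` of the quantum 4-sphere `S⁴_q`: the generators satisfy the relations, and
for any unital complex *-algebra with elements satisfying the relations there is a unique
unital *-algebra homomorphism sending generators to those elements. -/
def IsUniversalS4 (q : ℂ) (A : Type) [Ring A] [Algebra ℂ A] [StarRing A]
    [StarModule ℂ A] (α β z : A) : Prop :=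
  S4Rel q α β z ∧
    ∀ (B : Type) [Ring B] [Algebra ℂ B] [StarRing B] [StarModule ℂ B],
      ∀ a b c : B, S4Rel q a b c →
        ∃! φ : A →⋆ₐ[ℂ] B, φ α = a ∧ φ β = b ∧ φ z = c

/-
The substitution `α ↦ α*`, `β ↦ -q·β`, `z ↦ z` carries solutions of the relations with
parameter `q` to solutions with parameter `1/q`: the starred relations `α*β = conj(q)·βα*` and
`α*β* = q·β*α*` give the two commutation relations, and `|1/q|²·|q|² = 1` swaps the two
sphere relations. Applied twice (with `q`, then `1/q`) it returns the original generators, so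
by universality the two induced homomorphisms `A_{1/q} → A_q` and `A_q → A_{1/q}` are mutually
inverse.
-/

section

variable {A : Type*} [Ring A] [Algebra ℂ A] [StarRing A] [StarModule ℂ A]

theorem S4Rel.star_neg_smul {q : ℂ} (hq : q ≠ 0) {α β z : A} (h : S4Rel q α β z) :
    S4Rel (1 / q) (star α) (-(q • β)) z := by
  obtain ⟨hz, hzα, hzβ, hβα, hβ'α, hβ, hsphere₁, hsphere₂⟩ := h
  have hq' : star q ≠ 0 := star_ne_zero.mpr hq
  have hzα' : z * star α = star α * z := by simpa [hz] using (congrArg star hzα).symm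
  have hα'β : β * star α = (star q)⁻¹ • (star α * β) := by
    have : star α * β = star q • (β * star α) := by
      simpa [star_smul] using congrArg star hβ'α
    rw [this, smul_smul, inv_mul_cancel₀ hq', one_smul]
  have hα'β' : star β * star α = q⁻¹ • (star α * star β) := by
    have : star α * star β = q • (star β * star α) := by
      simpa [star_smul] using congrArg star hβα
    rw [this, smul_smul, inv_mul_cancel₀ hq, one_smul]
  refine ⟨hz, hzα', ?_, ?_, ?_, ?_, ?_, ?_⟩
  · simp only [mul_neg, neg_mul, mul_smul_comm, smul_mul_assoc, hzβ]
  · rw [neg_mul, smul_mul_assoc, hα'β, mul_neg, mul_smul_comm, map_div₀, map_one,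
      starRingEnd_apply]
    module
  · simp only [star_neg, star_smul, neg_mul, smul_mul_assoc, hα'β', mul_neg, mul_smul_comm]
    module
  · simp only [star_neg, star_smul, neg_mul, mul_neg, smul_mul_assoc, mul_smul_comm, hβ]
    module
  · have hscal : 1 / q * star (1 / q) * (q * star q) = 1 := by
      rw [star_div₀, star_one]
      field_simp
    rw [star_star]
    convert hsphere₂ using 3
    simp only [star_neg, star_smul, neg_mul, mul_neg, smul_neg, neg_neg, smul_mul_assoc,
      mul_smul_comm, smul_smul, starRingEnd_apply, ← hβ]
    rw [hscal, one_smul]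
  · rw [star_star]
    convert hsphere₁ using 3
    simp only [star_neg, star_smul, neg_mul, mul_neg, smul_neg, neg_neg, smul_mul_assoc,
      mul_smul_comm, smul_smul, starRingEnd_apply, hβ, mul_comm (star q)]

theorem S4Rel.map {B : Type*} [Ring B] [Algebra ℂ B] [StarRing B] [StarModule ℂ B]
    (f : A →⋆ₐ[ℂ] B) {q : ℂ} {α β z : A} (h : S4Rel q α β z) :
    S4Rel q (f α) (f β) (f z) := by
  obtain ⟨hz, hzα, hzβ, hβα, hβ'α, hβ, hsphere₁, hsphere₂⟩ := h
  refine ⟨?_, ?_, ?_, ?_, ?_, ?_, ?_, ?_⟩ <;>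
    simp only [← map_star, ← map_mul, ← map_smul, ← map_pow, ← map_add, ← map_one f] <;>
    exact congrArg f (by assumption)

end

theorem IsUniversalS4.hom_ext {q : ℂ} {A : Type} [Ring A] [Algebra ℂ A] [StarRing A]
    [StarModule ℂ A] {α β z : A} (hA : IsUniversalS4 q A α β z)
    {B : Type} [Ring B] [Algebra ℂ B] [StarRing B] [StarModule ℂ B] {φ ψ : A →⋆ₐ[ℂ] B}
    (hα : φ α = ψ α) (hβ : φ β = ψ β) (hz : φ z = ψ z) : φ = ψ :=
  (hA.2 B _ _ _ (hA.1.map ψ)).unique ⟨hα, hβ, hz⟩ ⟨rfl, rfl, rfl⟩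

/-- If `(α, β, z)` satisfy (s4rel) with parameter `q ≠ 0`, then
`(α*, -q·β, z)` satisfy (s4rel) with parameter `1/q`.  Consequently there is a unital
*-algebra isomorphism `Φ : A_{1/q} → A_q` determined on generators by `Φ(α) = α*`,
`Φ(β) = -q·β`, `Φ(z) = z`. -/
theorem s4_q_inverse_isomorphism (q : ℂ) (hq : q ≠ 0) :
    (∀ (A : Type) [Ring A] [Algebra ℂ A] [StarRing A] [StarModule ℂ A],
      ∀ α β z : A, S4Rel q α β z → S4Rel (1 / q) (star α) (-(q • β)) z) ∧
    (∀ (B : Type) [Ring B] [Algebra ℂ B] [StarRing B] [StarModule ℂ B],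
      ∀ α β z : B, IsUniversalS4 (1 / q) B α β z →
        ∀ (C : Type) [Ring C] [Algebra ℂ C] [StarRing C] [StarModule ℂ C],
          ∀ α' β' z' : C, IsUniversalS4 q C α' β' z' →
            ∃ Φ : B ≃⋆ₐ[ℂ] C, Φ α = star α' ∧ Φ β = -(q • β') ∧ Φ z = z') := by
  refine ⟨fun A _ _ _ _ α β z h ↦ h.star_neg_smul hq, ?_⟩
  intro B _ _ _ _ α β z hB C _ _ _ _ α' β' z' hC
  have hB' : S4Rel q (star α) (-((1 / q) • β)) z := by
    simpa only [one_div_one_div] using hB.1.star_neg_smul (one_div_ne_zero hq)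
  obtain ⟨φ, hφ, -⟩ := hB.2 C _ _ _ (hC.1.star_neg_smul hq)
  obtain ⟨ψ, hψ, -⟩ := hC.2 B _ _ _ hB'
  have hψφ : ψ.comp φ = StarAlgHom.id ℂ B := hB.hom_ext
    (by simp [map_star, hφ.1, hψ.1]) (by simp [hφ.2.1, hψ.2.1, smul_smul, hq])
    (by simp [hφ.2.2, hψ.2.2])
  have hφψ : φ.comp ψ = StarAlgHom.id ℂ C := hC.hom_ext
    (by simp [map_star, hφ.1, hψ.1]) (by simp [hφ.2.1, hψ.2.1, smul_smul, hq])
    (by simp [hφ.2.2, hψ.2.2])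
  exact ⟨StarAlgEquiv.ofStarAlgHom φ ψ hψφ hφψ, hφ⟩
end

section
/- Let q ∈ ℂ with q ≠ 0. The family of elements of A_q given by a_{k,m,n,ℓ} = (α*)^k · (β*)^m · β^n · z^ℓ for integers k, m, n, ℓ ≥ 0, together with a_{k,m,n,ℓ} = α^{−k} · (β*)^m · β^n · z^ℓ for integers k < 0 and m, n, ℓ ≥ 0, is a ℂ-linear basis of A_q (it spans A_q and is linearly independent over ℂ). -/
open ComplexConjugate

lemma mul_pow_eq_smul_of_mul_eq_smul {K A : Type*} [CommSemiring K] [Semiring A] [Algebra K A]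
    {g x : A} {c : K} (h : g * x = c • (x * g)) (j : ℕ) : g * x ^ j = c ^ j • (x ^ j * g) := by
  induction j with
  | zero => simp
  | succ j ih =>
    rw [pow_succ, ← mul_assoc, ih, smul_mul_assoc, mul_assoc, h, mul_smul_comm, smul_smul,
      ← mul_assoc, ← pow_succ, ← pow_succ]

theorem Submodule.span_range_eq_top_of_mul_mem {K A ι : Type*} [CommSemiring K] [Semiring A]
    [Algebra K A] {s : Set A} (hs : Algebra.adjoin K s = ⊤) {v : ι → A}
    (h1 : 1 ∈ span K (Set.range v)) (hmul : ∀ g ∈ s, ∀ i, g * v i ∈ span K (Set.range v)) :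
    span K (Set.range v) = ⊤ := by
  set P := span K (Set.range v)
  have hgen : ∀ g ∈ s, ∀ x ∈ P, g * x ∈ P := fun g hg =>
    span_le (p := P.comap (LinearMap.mulLeft K g)).mpr (Set.range_subset_iff.mpr (hmul g hg))
  have hall : ∀ b ∈ Algebra.adjoin K s, ∀ x ∈ P, b * x ∈ P := fun b hb => by
    induction hb using Algebra.adjoin_induction with
    | mem g hg => exact hgen g hg
    | algebraMap c => intro x hx; rw [← Algebra.smul_def]; exact P.smul_mem c hx
    | add u w _ _ hu hw => intro x hx; rw [add_mul]; exact P.add_mem (hu x hx) (hw x hx)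
    | mul u w _ _ hu hw => intro x hx; rw [mul_assoc]; exact hu _ (hw x hx)
  refine eq_top_iff.mpr fun b _ => ?_
  simpa using hall b (hs ▸ Algebra.mem_top) 1 h1

/-- `R × Rᵐᵒᵖ` with `star (x, y) = (y, x)` and `c • (x, y) = (c • x, star c • y)`:
a pair `(x, y)` stands for an element `x` together with a prescribed adjoint `y`. -/
def StarDouble (R : Type*) : Type _ := R × Rᵐᵒᵖ

namespace StarDouble

variable {K R : Type*}

def mk (x y : R) : StarDouble R := (x, MulOpposite.op y)

lemma exists_eq_mk (x : StarDouble R) : ∃ a b, x = mk a b := ⟨x.1, x.2.unop, rfl⟩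

@[simp] lemma mk_inj {x y x' y' : R} : mk x y = mk x' y' ↔ x = x' ∧ y = y' := by
  change ((x, MulOpposite.op y) : R × Rᵐᵒᵖ) = (x', MulOpposite.op y') ↔ _
  simp

section Ring
variable [Ring R]

instance : Ring (StarDouble R) := inferInstanceAs (Ring (R × Rᵐᵒᵖ))

@[simp] lemma zero_eq : (0 : StarDouble R) = mk 0 0 := rfl
@[simp] lemma one_eq : (1 : StarDouble R) = mk 1 1 := rfl
@[simp] lemma mk_add (x y x' y' : R) : mk x y + mk x' y' = mk (x + x') (y + y') := rfl
@[simp] lemma mk_mul (x y x' y' : R) : mk x y * mk x' y' = mk (x * x') (y' * y) := rfl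
@[simp] lemma mk_pow (x y : R) (n : ℕ) : mk x y ^ n = mk (x ^ n) (y ^ n) := by
  induction n with
  | zero => rfl
  | succ n ih => rw [pow_succ, ih, mk_mul, ← pow_succ, ← pow_succ']

instance : StarRing (StarDouble R) where
  star x := (x.2.unop, MulOpposite.op x.1)
  star_involutive _ := rfl
  star_mul _ _ := rfl
  star_add _ _ := rfl

@[simp] lemma star_mk (x y : R) : star (mk x y) = mk y x := rfl

end Ring

variable [CommSemiring K] [StarRing K] [Ring R] [Algebra K R]

instance : SMul K (StarDouble R) :=
  ⟨fun c x => (c • x.1, MulOpposite.op (star c • x.2.unop))⟩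

@[simp] lemma smul_mk (c : K) (x y : R) : c • mk x y = mk (c • x) (star c • y) := rfl

instance : Module K (StarDouble R) where
  one_smul x := by obtain ⟨a, b, rfl⟩ := exists_eq_mk x; simp
  mul_smul c d x := by obtain ⟨a, b, rfl⟩ := exists_eq_mk x; simp [mul_smul]
  smul_zero c := by simp
  smul_add c x y := by
    obtain ⟨a, b, rfl⟩ := exists_eq_mk x; obtain ⟨a', b', rfl⟩ := exists_eq_mk y; simp
  add_smul c d x := by obtain ⟨a, b, rfl⟩ := exists_eq_mk x; simp [add_smul]
  zero_smul x := by obtain ⟨a, b, rfl⟩ := exists_eq_mk x; simp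

instance : Algebra K (StarDouble R) :=
  Algebra.ofModule
    (fun c x y => by
      obtain ⟨a, b, rfl⟩ := exists_eq_mk x; obtain ⟨a', b', rfl⟩ := exists_eq_mk y; simp)
    (fun c x y => by
      obtain ⟨a, b, rfl⟩ := exists_eq_mk x; obtain ⟨a', b', rfl⟩ := exists_eq_mk y; simp)

instance : StarModule K (StarDouble R) where
  star_smul c x := by obtain ⟨a, b, rfl⟩ := exists_eq_mk x; simp

def fstAlgHom : StarDouble R →ₐ[K] R where
  toFun x := (show R × Rᵐᵒᵖ from x).1
  map_one' := rfl
  map_mul' _ _ := rfl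
  map_zero' := rfl
  map_add' _ _ := rfl
  commutes' c := by
    rw [Algebra.algebraMap_eq_smul_one, Algebra.algebraMap_eq_smul_one]; rfl

@[simp] lemma fstAlgHom_mk (x y : R) : fstAlgHom (K := K) (mk x y) = x := rfl

end StarDouble

section Monomial

variable {A : Type*} [Ring A] [StarRing A]

def alphaPow (α : A) (k : ℤ) : A := if 0 ≤ k then star α ^ k.toNat else α ^ (-k).toNat

def monomial (α β z : A) : ℤ × ℕ × ℕ × ℕ → A
  | (k, m, n, l) => alphaPow α k * star β ^ m * β ^ n * z ^ l

variable {α β z : A}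

@[simp] lemma alphaPow_natCast (j : ℕ) : alphaPow α j = star α ^ j := by simp [alphaPow]

@[simp] lemma alphaPow_neg_natCast (j : ℕ) : alphaPow α (-j) = α ^ j := by
  rcases j.eq_zero_or_pos with rfl | hj
  · simp [alphaPow]
  · simp [alphaPow, hj.ne']

lemma star_alpha_mul_alphaPow_of_nonneg {k : ℤ} (hk : 0 ≤ k) :
    star α * alphaPow α k = alphaPow α (k + 1) := by
  lift k to ℕ using hk
  rw [alphaPow_natCast, ← pow_succ', ← Nat.cast_succ, alphaPow_natCast]

lemma alpha_mul_alphaPow_of_nonpos {k : ℤ} (hk : k ≤ 0) :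
    α * alphaPow α k = alphaPow α (k - 1) := by
  obtain ⟨j, rfl⟩ : ∃ j : ℕ, k = -j := ⟨(-k).toNat, by omega⟩
  rw [show -(j : ℤ) - 1 = -(j + 1 : ℕ) by push_cast; ring, alphaPow_neg_natCast,
    alphaPow_neg_natCast, pow_succ']

lemma monomial_eq (k : ℤ) (m n l : ℕ) :
    monomial α β z (k, m, n, l) = alphaPow α k * (star β ^ m * (β ^ n * z ^ l)) := by
  simp only [monomial, mul_assoc]

lemma star_alpha_mul_monomial_of_nonneg {k : ℤ} (hk : 0 ≤ k) (m n l : ℕ) :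
    star α * monomial α β z (k, m, n, l) = monomial α β z (k + 1, m, n, l) := by
  rw [monomial_eq, monomial_eq, ← mul_assoc, star_alpha_mul_alphaPow_of_nonneg hk]

lemma alpha_mul_monomial_of_nonpos {k : ℤ} (hk : k ≤ 0) (m n l : ℕ) :
    α * monomial α β z (k, m, n, l) = monomial α β z (k - 1, m, n, l) := by
  rw [monomial_eq, monomial_eq, ← mul_assoc, alpha_mul_alphaPow_of_nonpos hk]

lemma map_monomial {A B F : Type*} [Ring A] [StarRing A] [Ring B] [StarRing B] [FunLike F A B]
    [RingHomClass F A B] [StarHomClass F A B] (φ : F) (α β z : A) (i : ℤ × ℕ × ℕ × ℕ) :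
    φ (monomial α β z i) = monomial (φ α) (φ β) (φ z) i := by
  obtain ⟨k, m, n, l⟩ := i
  simp [monomial, alphaPow, apply_ite φ, map_star]

end Monomial

namespace S4Rel

variable {A : Type*} [Ring A] [Algebra ℂ A] [StarRing A] [StarModule ℂ A] {q : ℂ} {α β z : A}

lemma commute_z_alpha (h : S4Rel q α β z) : Commute z α := h.2.1
lemma commute_z_beta (h : S4Rel q α β z) : Commute z β := h.2.2.1
lemma commute_beta_star_beta (h : S4Rel q α β z) : Commute β (star β) := h.2.2.2.2.2.1
lemma beta_mul_alpha (h : S4Rel q α β z) : β * α = conj q • (α * β) := h.2.2.2.1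
lemma star_beta_mul_alpha (h : S4Rel q α β z) : star β * α = q • (α * star β) := h.2.2.2.2.1

lemma commute_z_star (h : S4Rel q α β z) {x : A} (hx : Commute z x) : Commute z (star x) := by
  simpa [h.1] using hx.star_star

lemma beta_mul_star_alpha (h : S4Rel q α β z) (hq : q ≠ 0) :
    β * star α = (conj q)⁻¹ • (star α * β) := by
  rw [eq_inv_smul_iff₀ ((map_ne_zero _).mpr hq)]
  simpa using (congrArg star h.star_beta_mul_alpha).symm

lemma star_beta_mul_star_alpha (h : S4Rel q α β z) (hq : q ≠ 0) :
    star β * star α = q⁻¹ • (star α * star β) := by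
  rw [eq_inv_smul_iff₀ hq]
  simpa using (congrArg star h.beta_mul_alpha).symm

lemma star_alpha_mul_alpha (h : S4Rel q α β z) :
    star α * α = 1 - (q * conj q) • (star β * β) - z ^ 2 := by
  rw [← h.2.2.2.2.2.2.1]; abel

lemma alpha_mul_star_alpha (h : S4Rel q α β z) : α * star α = 1 - star β * β - z ^ 2 := by
  rw [← h.2.2.2.2.2.2.2, h.2.2.2.2.2.1]; abel

lemma beta_mul_alphaPow (h : S4Rel q α β z) (hq : q ≠ 0) (k : ℤ) :
    β * alphaPow α k = conj q ^ (-k) • (alphaPow α k * β) := by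
  obtain ⟨j, rfl | rfl⟩ := Int.eq_nat_or_neg k
  · simp [mul_pow_eq_smul_of_mul_eq_smul (h.beta_mul_star_alpha hq)]
  · simp [mul_pow_eq_smul_of_mul_eq_smul h.beta_mul_alpha]

lemma star_beta_mul_alphaPow (h : S4Rel q α β z) (hq : q ≠ 0) (k : ℤ) :
    star β * alphaPow α k = q ^ (-k) • (alphaPow α k * star β) := by
  obtain ⟨j, rfl | rfl⟩ := Int.eq_nat_or_neg k
  · simp [mul_pow_eq_smul_of_mul_eq_smul (h.star_beta_mul_star_alpha hq)]
  · simp [mul_pow_eq_smul_of_mul_eq_smul h.star_beta_mul_alpha]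

lemma commute_z_alphaPow (h : S4Rel q α β z) (k : ℤ) : Commute z (alphaPow α k) := by
  unfold alphaPow
  split
  · exact (h.commute_z_star h.commute_z_alpha).pow_right _
  · exact h.commute_z_alpha.pow_right _

lemma star_alpha_mul_alphaPow_of_neg (h : S4Rel q α β z) {k : ℤ} (hk : k < 0) :
    star α * alphaPow α k = (1 - (q * conj q) • (star β * β) - z ^ 2) * alphaPow α (k + 1) := by
  obtain ⟨j, rfl⟩ : ∃ j : ℕ, k = -(j + 1 : ℕ) := ⟨(-k - 1).toNat, by omega⟩
  rw [show -((j + 1 : ℕ) : ℤ) + 1 = -j by push_cast; ring, alphaPow_neg_natCast,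
    alphaPow_neg_natCast, pow_succ', ← mul_assoc, h.star_alpha_mul_alpha]

lemma alpha_mul_alphaPow_of_pos (h : S4Rel q α β z) {k : ℤ} (hk : 0 < k) :
    α * alphaPow α k = (1 - star β * β - z ^ 2) * alphaPow α (k - 1) := by
  obtain ⟨j, rfl⟩ : ∃ j : ℕ, k = (j + 1 : ℕ) := ⟨(k - 1).toNat, by omega⟩
  rw [show ((j + 1 : ℕ) : ℤ) - 1 = j by push_cast; ring, alphaPow_natCast, alphaPow_natCast,
    pow_succ', ← mul_assoc, h.alpha_mul_star_alpha]

lemma beta_mul_star_beta_pow_beta_pow_z_pow (h : S4Rel q α β z) (m n l : ℕ) :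
    β * (star β ^ m * (β ^ n * z ^ l)) = star β ^ m * (β ^ (n + 1) * z ^ l) := by
  rw [← mul_assoc, (h.commute_beta_star_beta.pow_right m).eq, mul_assoc, ← mul_assoc β,
    ← pow_succ']

lemma z_mul_star_beta_pow_beta_pow_z_pow (h : S4Rel q α β z) (m n l : ℕ) :
    z * (star β ^ m * (β ^ n * z ^ l)) = star β ^ m * (β ^ n * z ^ (l + 1)) := by
  rw [← mul_assoc, ((h.commute_z_star h.commute_z_beta).pow_right m).eq, mul_assoc,
    ← mul_assoc z, (h.commute_z_beta.pow_right n).eq, mul_assoc, ← pow_succ']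

lemma z_mul_monomial (h : S4Rel q α β z) (k : ℤ) (m n l : ℕ) :
    z * monomial α β z (k, m, n, l) = monomial α β z (k, m, n, l + 1) := by
  rw [monomial_eq, monomial_eq, ← mul_assoc, (h.commute_z_alphaPow k).eq, mul_assoc,
    h.z_mul_star_beta_pow_beta_pow_z_pow]

lemma beta_mul_monomial (h : S4Rel q α β z) (hq : q ≠ 0) (k : ℤ) (m n l : ℕ) :
    β * monomial α β z (k, m, n, l) = conj q ^ (-k) • monomial α β z (k, m, n + 1, l) := by
  rw [monomial_eq, monomial_eq, ← mul_assoc, h.beta_mul_alphaPow hq, smul_mul_assoc, mul_assoc,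
    h.beta_mul_star_beta_pow_beta_pow_z_pow]

lemma star_beta_mul_monomial (h : S4Rel q α β z) (hq : q ≠ 0) (k : ℤ) (m n l : ℕ) :
    star β * monomial α β z (k, m, n, l) = q ^ (-k) • monomial α β z (k, m + 1, n, l) := by
  rw [monomial_eq, monomial_eq, ← mul_assoc, h.star_beta_mul_alphaPow hq, smul_mul_assoc,
    mul_assoc, ← mul_assoc (star β), ← pow_succ']

lemma star_alpha_mul_monomial_of_neg (h : S4Rel q α β z) (hq : q ≠ 0) {k : ℤ} (hk : k < 0)
    (m n l : ℕ) :
    star α * monomial α β z (k, m, n, l) = monomial α β z (k + 1, m, n, l)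
      - (q * conj q) ^ (-k) • monomial α β z (k + 1, m + 1, n + 1, l)
      - monomial α β z (k + 1, m, n, l + 2) := by
  have hqq : q * conj q ≠ 0 := mul_ne_zero hq ((map_ne_zero _).mpr hq)
  have hα : star α * monomial α β z (k, m, n, l) =
      (1 - (q * conj q) • (star β * β) - z ^ 2) * monomial α β z (k + 1, m, n, l) := by
    rw [monomial_eq, monomial_eq, ← mul_assoc, h.star_alpha_mul_alphaPow_of_neg hk, mul_assoc]
  have hc : q * conj q * conj q ^ (-(k + 1)) * q ^ (-(k + 1)) = (q * conj q) ^ (-k) := by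
    rw [mul_assoc, mul_comm (conj q ^ _), ← mul_zpow, ← zpow_one_add₀ hqq]
    congr 1; ring
  rw [hα, sub_mul, sub_mul, one_mul, smul_mul_assoc, mul_assoc, h.beta_mul_monomial hq,
    mul_smul_comm, h.star_beta_mul_monomial hq, smul_smul, smul_smul, hc, sq, mul_assoc z z,
    h.z_mul_monomial, h.z_mul_monomial]

lemma alpha_mul_monomial_of_pos (h : S4Rel q α β z) (hq : q ≠ 0) {k : ℤ} (hk : 0 < k)
    (m n l : ℕ) :
    α * monomial α β z (k, m, n, l) = monomial α β z (k - 1, m, n, l)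
      - (q * conj q) ^ (1 - k) • monomial α β z (k - 1, m + 1, n + 1, l)
      - monomial α β z (k - 1, m, n, l + 2) := by
  have hα : α * monomial α β z (k, m, n, l) =
      (1 - star β * β - z ^ 2) * monomial α β z (k - 1, m, n, l) := by
    rw [monomial_eq, monomial_eq, ← mul_assoc, h.alpha_mul_alphaPow_of_pos hk, mul_assoc]
  rw [hα, sub_mul, sub_mul, one_mul, mul_assoc, h.beta_mul_monomial hq,
    mul_smul_comm, h.star_beta_mul_monomial hq, smul_smul, sq, mul_assoc z z,
    h.z_mul_monomial, h.z_mul_monomial, mul_comm (conj q ^ _), ← mul_zpow, neg_sub]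

lemma mul_monomial_mem_span (h : S4Rel q α β z) (hq : q ≠ 0) {g : A}
    (hg : g ∈ ({α, β, z} ∪ star {α, β, z} : Set A)) (i : ℤ × ℕ × ℕ × ℕ) :
    g * monomial α β z i ∈ Submodule.span ℂ (Set.range (monomial α β z)) := by
  set P := Submodule.span ℂ (Set.range (monomial α β z))
  have hP (i) : monomial α β z i ∈ P := Submodule.subset_span ⟨i, rfl⟩
  obtain ⟨k, m, n, l⟩ := i
  simp only [Set.mem_union, Set.mem_insert_iff, Set.mem_singleton_iff, Set.mem_star] at hg
  rcases hg with (rfl | rfl | rfl) | hg | hg | hg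
  · rcases le_or_gt k 0 with hk | hk
    · rw [alpha_mul_monomial_of_nonpos hk]; exact hP _
    · rw [h.alpha_mul_monomial_of_pos hq hk]
      exact P.sub_mem (P.sub_mem (hP _) (P.smul_mem _ (hP _))) (hP _)
  · rw [h.beta_mul_monomial hq]; exact P.smul_mem _ (hP _)
  · rw [h.z_mul_monomial]; exact hP _
  · rw [← star_star g, hg]
    rcases le_or_gt 0 k with hk | hk
    · rw [star_alpha_mul_monomial_of_nonneg hk]; exact hP _
    · rw [h.star_alpha_mul_monomial_of_neg hq hk]
      exact P.sub_mem (P.sub_mem (hP _) (P.smul_mem _ (hP _))) (hP _)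
  · rw [← star_star g, hg, h.star_beta_mul_monomial hq]; exact P.smul_mem _ (hP _)
  · rw [← star_star g, hg, h.1, h.z_mul_monomial]; exact hP _

end S4Rel

namespace S4Model

-- A named basis rather than `Finsupp.single i 1`, which `simp` would rewrite coefficientwise.
noncomputable def e : Module.Basis (ℤ × ℕ × ℕ × ℕ) ℂ ((ℤ × ℕ × ℕ × ℕ) →₀ ℂ) :=
  Finsupp.basisSingleOne

variable (q : ℂ)

-- `xOp (e i)` is the expansion of `x * monomial α β z i` from `S4Rel.x_mul_monomial`.
noncomputable def zOp : Module.End ℂ ((ℤ × ℕ × ℕ × ℕ) →₀ ℂ) :=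
  e.constr ℂ fun (k, m, n, l) => e (k, m, n, l + 1)

noncomputable def betaOp : Module.End ℂ ((ℤ × ℕ × ℕ × ℕ) →₀ ℂ) :=
  e.constr ℂ fun (k, m, n, l) => conj q ^ (-k) • e (k, m, n + 1, l)

noncomputable def starBetaOp : Module.End ℂ ((ℤ × ℕ × ℕ × ℕ) →₀ ℂ) :=
  e.constr ℂ fun (k, m, n, l) => q ^ (-k) • e (k, m + 1, n, l)

noncomputable def starAlphaOp : Module.End ℂ ((ℤ × ℕ × ℕ × ℕ) →₀ ℂ) :=
  e.constr ℂ fun (k, m, n, l) =>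
    if 0 ≤ k then e (k + 1, m, n, l)
    else e (k + 1, m, n, l) - (q * conj q) ^ (-k) • e (k + 1, m + 1, n + 1, l)
      - e (k + 1, m, n, l + 2)

noncomputable def alphaOp : Module.End ℂ ((ℤ × ℕ × ℕ × ℕ) →₀ ℂ) :=
  e.constr ℂ fun (k, m, n, l) =>
    if k ≤ 0 then e (k - 1, m, n, l)
    else e (k - 1, m, n, l) - (q * conj q) ^ (1 - k) • e (k - 1, m + 1, n + 1, l)
      - e (k - 1, m, n, l + 2)

variable {q}

lemma commute_zOp_alphaOp : Commute zOp (alphaOp q) := by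
  refine e.ext fun ⟨k, m, n, l⟩ => ?_
  by_cases hk : k ≤ 0 <;> simp [zOp, alphaOp, hk]

lemma commute_zOp_starAlphaOp : Commute zOp (starAlphaOp q) := by
  refine e.ext fun ⟨k, m, n, l⟩ => ?_
  by_cases hk : 0 ≤ k <;> simp [zOp, starAlphaOp, hk]

lemma commute_zOp_betaOp : Commute zOp (betaOp q) := by
  refine e.ext fun ⟨k, m, n, l⟩ => ?_
  simp [zOp, betaOp]

lemma commute_zOp_starBetaOp : Commute zOp (starBetaOp q) := by
  refine e.ext fun ⟨k, m, n, l⟩ => ?_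
  simp [zOp, starBetaOp]

lemma commute_betaOp_starBetaOp : Commute (betaOp q) (starBetaOp q) := by
  refine e.ext fun ⟨k, m, n, l⟩ => ?_
  simp only [Module.End.mul_apply, betaOp, starBetaOp, e.constr_basis, map_smul]
  exact smul_comm _ _ _

lemma betaOp_mul_alphaOp (hq : q ≠ 0) :
    betaOp q * alphaOp q = conj q • (alphaOp q * betaOp q) := by
  have hc : conj q ≠ 0 := (map_ne_zero _).mpr hq
  refine e.ext fun ⟨k, m, n, l⟩ => ?_
  by_cases hk : k ≤ 0 <;>
    simp [betaOp, alphaOp, hk, smul_sub, smul_smul, mul_zpow, zpow_sub₀ hq, zpow_sub₀ hc] <;>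
    match_scalars <;> field_simp

lemma starBetaOp_mul_alphaOp (hq : q ≠ 0) :
    starBetaOp q * alphaOp q = q • (alphaOp q * starBetaOp q) := by
  have hc : conj q ≠ 0 := (map_ne_zero _).mpr hq
  refine e.ext fun ⟨k, m, n, l⟩ => ?_
  by_cases hk : k ≤ 0 <;>
    simp [starBetaOp, alphaOp, hk, smul_sub, smul_smul, mul_zpow, zpow_sub₀ hq, zpow_sub₀ hc] <;>
    match_scalars <;> field_simp

lemma starAlphaOp_mul_starBetaOp (hq : q ≠ 0) :
    starAlphaOp q * starBetaOp q = q • (starBetaOp q * starAlphaOp q) := by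
  refine e.ext fun ⟨k, m, n, l⟩ => ?_
  by_cases hk : 0 ≤ k <;>
    simp [starBetaOp, starAlphaOp, hk, smul_sub, smul_smul, mul_zpow, zpow_add₀ hq] <;>
    match_scalars <;> field_simp

lemma starAlphaOp_mul_betaOp (hq : q ≠ 0) :
    starAlphaOp q * betaOp q = conj q • (betaOp q * starAlphaOp q) := by
  have hc : conj q ≠ 0 := (map_ne_zero _).mpr hq
  refine e.ext fun ⟨k, m, n, l⟩ => ?_
  by_cases hk : 0 ≤ k <;>
    simp [betaOp, starAlphaOp, hk, smul_sub, smul_smul, mul_zpow, zpow_add₀ hc] <;>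
    match_scalars <;> field_simp

lemma starAlphaOp_mul_alphaOp_add (hq : q ≠ 0) :
    starAlphaOp q * alphaOp q + (q * conj q) • (starBetaOp q * betaOp q) + zOp * zOp = 1 := by
  have hc : conj q ≠ 0 := (map_ne_zero _).mpr hq
  refine e.ext fun ⟨k, m, n, l⟩ => ?_
  rcases le_or_gt k 0 with hk | hk
  · simp [betaOp, alphaOp, starAlphaOp, starBetaOp, zOp, hk, show ¬ 1 ≤ k by omega, smul_smul,
      mul_zpow, zpow_sub₀ hq, zpow_sub₀ hc]
    match_scalars <;> field_simp <;> ring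
  · simp [betaOp, alphaOp, starAlphaOp, starBetaOp, zOp, hk.not_ge, show 1 ≤ k by omega,
      smul_smul, mul_zpow, zpow_sub₀ hq, zpow_sub₀ hc]
    match_scalars <;> field_simp <;> ring

lemma alphaOp_mul_starAlphaOp_add :
    alphaOp q * starAlphaOp q + betaOp q * starBetaOp q + zOp * zOp = 1 := by
  refine e.ext fun ⟨k, m, n, l⟩ => ?_
  rcases le_or_gt 0 k with hk | hk
  · simp [betaOp, alphaOp, starAlphaOp, starBetaOp, zOp, hk, show ¬ k + 1 ≤ 0 by omega,
      smul_smul, mul_zpow]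
    match_scalars <;> field_simp <;> ring
  · simp [betaOp, alphaOp, starAlphaOp, starBetaOp, zOp, hk.not_ge, show k + 1 ≤ 0 by omega,
      smul_smul, mul_zpow]
    match_scalars <;> field_simp <;> ring

lemma zOp_pow_apply (t : ℕ) (k : ℤ) (m n l : ℕ) :
    (zOp ^ t) (e (k, m, n, l)) = e (k, m, n, l + t) := by
  induction t with
  | zero => simp
  | succ t ih => rw [pow_succ', Module.End.mul_apply, ih]; simp [zOp, add_assoc]

lemma betaOp_pow_apply (t m n l : ℕ) : (betaOp q ^ t) (e (0, m, n, l)) = e (0, m, n + t, l) := by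
  induction t with
  | zero => simp
  | succ t ih => rw [pow_succ', Module.End.mul_apply, ih]; simp [betaOp, add_assoc]

lemma starBetaOp_pow_apply (t m n l : ℕ) :
    (starBetaOp q ^ t) (e (0, m, n, l)) = e (0, m + t, n, l) := by
  induction t with
  | zero => simp
  | succ t ih => rw [pow_succ', Module.End.mul_apply, ih]; simp [starBetaOp, add_assoc]

lemma starAlphaOp_pow_apply (t m n l : ℕ) :
    (starAlphaOp q ^ t) (e (0, m, n, l)) = e (t, m, n, l) := by
  induction t with
  | zero => simp
  | succ t ih => rw [pow_succ', Module.End.mul_apply, ih]; simp [starAlphaOp]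

lemma alphaOp_pow_apply (t m n l : ℕ) :
    (alphaOp q ^ t) (e (0, m, n, l)) = e (-t, m, n, l) := by
  induction t with
  | zero => simp
  | succ t ih => rw [pow_succ', Module.End.mul_apply, ih]; simp [alphaOp, sub_eq_add_neg, add_comm]

variable (q) in
noncomputable def alpha : StarDouble (Module.End ℂ ((ℤ × ℕ × ℕ × ℕ) →₀ ℂ)) :=
  StarDouble.mk (alphaOp q) (starAlphaOp q)

variable (q) in
noncomputable def beta : StarDouble (Module.End ℂ ((ℤ × ℕ × ℕ × ℕ) →₀ ℂ)) :=
  StarDouble.mk (betaOp q) (starBetaOp q)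

noncomputable def zeta : StarDouble (Module.End ℂ ((ℤ × ℕ × ℕ × ℕ) →₀ ℂ)) :=
  StarDouble.mk zOp zOp

lemma s4Rel (hq : q ≠ 0) : S4Rel q (alpha q) (beta q) zeta := by
  refine ⟨rfl, ?_, ?_, ?_, ?_, ?_, ?_, ?_⟩ <;>
    simp only [alpha, beta, zeta, StarDouble.star_mk, StarDouble.mk_mul, StarDouble.smul_mk,
      StarDouble.mk_add, StarDouble.mk_pow, StarDouble.one_eq, StarDouble.mk_inj]
  · exact ⟨commute_zOp_alphaOp.eq, commute_zOp_starAlphaOp.eq.symm⟩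
  · exact ⟨commute_zOp_betaOp.eq, commute_zOp_starBetaOp.eq.symm⟩
  · simpa using ⟨betaOp_mul_alphaOp hq, starAlphaOp_mul_starBetaOp hq⟩
  · exact ⟨starBetaOp_mul_alphaOp hq, starAlphaOp_mul_betaOp hq⟩
  · exact ⟨commute_betaOp_starBetaOp.eq, commute_betaOp_starBetaOp.eq⟩
  · simpa [mul_comm q, sq] using starAlphaOp_mul_alphaOp_add hq
  · simpa [sq] using alphaOp_mul_starAlphaOp_add

lemma fstAlgHom_monomial_apply (i : ℤ × ℕ × ℕ × ℕ) :
    StarDouble.fstAlgHom (K := ℂ) (monomial (alpha q) (beta q) zeta i) (e (0, 0, 0, 0)) = e i := by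
  obtain ⟨k, m, n, l⟩ := i
  obtain ⟨j, rfl | rfl⟩ := Int.eq_nat_or_neg k
  · simp [monomial, alpha, beta, zeta, zOp_pow_apply, betaOp_pow_apply, starBetaOp_pow_apply,
      starAlphaOp_pow_apply]
  · simp [monomial, alpha, beta, zeta, zOp_pow_apply, betaOp_pow_apply, starBetaOp_pow_apply,
      alphaOp_pow_apply]

end S4Model

namespace IsUniversalS4

variable {q : ℂ} {A : Type} [Ring A] [Algebra ℂ A] [StarRing A] [StarModule ℂ A] {α β z : A}

lemma adjoin_eq_top (h : IsUniversalS4 q A α β z) : StarAlgebra.adjoin ℂ {α, β, z} = ⊤ := by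
  set T := StarAlgebra.adjoin ℂ ({α, β, z} : Set A)
  have hα : α ∈ T := StarAlgebra.subset_adjoin ℂ _ (by simp)
  have hβ : β ∈ T := StarAlgebra.subset_adjoin ℂ _ (by simp)
  have hz : z ∈ T := StarAlgebra.subset_adjoin ℂ _ (by simp)
  have hT : S4Rel q (⟨α, hα⟩ : T) ⟨β, hβ⟩ ⟨z, hz⟩ := by
    obtain ⟨h1, h2, h3, h4, h5, h6, h7, h8⟩ := h.1
    refine ⟨?_, ?_, ?_, ?_, ?_, ?_, ?_, ?_⟩ <;> apply Subtype.ext <;> push_cast <;> assumption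
  obtain ⟨φ, hφ, -⟩ := h.2 T _ _ _ hT
  have hid : T.subtype.comp φ = StarAlgHom.id ℂ A :=
    (h.2 A α β z h.1).unique (by simp [hφ.1, hφ.2.1, hφ.2.2]) ⟨rfl, rfl, rfl⟩
  refine eq_top_iff.mpr fun x _ => ?_
  have hx : (φ x : A) = x := congrArg (· x) hid
  exact hx ▸ (φ x).2

lemma linearIndependent_monomial (h : IsUniversalS4 q A α β z) (hq : q ≠ 0) :
    LinearIndependent ℂ (monomial α β z) := by
  obtain ⟨φ, ⟨hα, hβ, hz⟩, -⟩ := h.2 _ _ _ _ (S4Model.s4Rel hq)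
  let ev : A →ₗ[ℂ] (ℤ × ℕ × ℕ × ℕ) →₀ ℂ :=
    LinearMap.applyₗ (S4Model.e (0, 0, 0, 0)) ∘ₗ (StarDouble.fstAlgHom.comp φ.toAlgHom).toLinearMap
  have hev : ev ∘ monomial α β z = S4Model.e := funext fun i => by
    simp [ev, map_monomial, hα, hβ, hz, S4Model.fstAlgHom_monomial_apply]
  exact LinearIndependent.of_comp ev (hev ▸ S4Model.e.linearIndependent)

lemma span_monomial_eq_top (h : IsUniversalS4 q A α β z) (hq : q ≠ 0) :
    Submodule.span ℂ (Set.range (monomial α β z)) = ⊤ := by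
  refine Submodule.span_range_eq_top_of_mul_mem (s := {α, β, z} ∪ star {α, β, z}) ?_
    (Submodule.subset_span ⟨(0, 0, 0, 0), by simp [monomial, alphaPow]⟩)
    fun g hg i => h.1.mul_monomial_mem_span hq hg i
  rw [← StarAlgebra.adjoin_toSubalgebra, h.adjoin_eq_top, StarSubalgebra.top_toSubalgebra]

end IsUniversalS4

/-- For `q ≠ 0`, the family `a_{k,m,n,ℓ} = (α*)^k (β*)^m β^n z^ℓ` (for
`k ≥ 0`) and `a_{k,m,n,ℓ} = α^{-k} (β*)^m β^n z^ℓ` (for `k < 0`), with `m, n, ℓ ≥ 0`,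
is a ℂ-linear basis of `A_q`: it is linearly independent over ℂ and spans `A_q`. -/
theorem s4_q_basis (q : ℂ) (hq : q ≠ 0)
    (A : Type) [Ring A] [Algebra ℂ A] [StarRing A] [StarModule ℂ A]
    (α β z : A) (h : IsUniversalS4 q A α β z)
    (a : ℤ × ℕ × ℕ × ℕ → A)
    (ha : ∀ (k : ℤ) (m n ℓ : ℕ), a (k, m, n, ℓ) =
      (if 0 ≤ k then star α ^ k.toNat else α ^ (-k).toNat) *
        star β ^ m * β ^ n * z ^ ℓ) :
    LinearIndependent ℂ a ∧ Submodule.span ℂ (Set.range a) = ⊤ := by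
  obtain rfl : a = monomial α β z := funext fun ⟨k, m, n, ℓ⟩ => ha k m n ℓ
  exact ⟨h.linearIndependent_monomial hq, h.span_monomial_eq_top hq⟩
end

section
/- Let q ∈ ℂ with 0 < |q| < 1, and let α, β, z be elements of a unital *-algebra A over ℂ satisfying the relations (s4rel) with parameter q. Let χ: A → ℂ be a unital ℂ-algebra homomorphism satisfying χ(a*) = conj(χ(a)) for all a ∈ A. Then χ(β) = 0, χ(z) is real, and |χ(α)|² + χ(z)² = 1. -/
open ComplexConjugate

section Character

variable {A : Type*} [Ring A] [Algebra ℂ A] [StarRing A] {χ : A →ₐ[ℂ] ℂ}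

theorem map_star_mul_self_of_map_star (hχ : ∀ a : A, χ (star a) = conj (χ a)) (a : A) :
    χ (star a * a) = Complex.normSq (χ a) := by
  rw [map_mul, hχ, Complex.normSq_eq_conj_mul_self]

theorem map_mul_star_self_of_map_star (hχ : ∀ a : A, χ (star a) = conj (χ a)) (a : A) :
    χ (a * star a) = Complex.normSq (χ a) := by
  rw [map_mul, hχ, Complex.mul_conj]

theorem conj_map_of_map_star (hχ : ∀ a : A, χ (star a) = conj (χ a)) {a : A}
    (ha : star a = a) : conj (χ a) = χ a := by
  rw [← hχ, ha]

end Character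

namespace S4Rel

variable {A : Type*} [Ring A] [Algebra ℂ A] [StarRing A] [StarModule ℂ A]
  {q : ℂ} {α β z : A} {χ : A →ₐ[ℂ] ℂ}

theorem normSq_map_add_normSq_map (h : S4Rel q α β z)
    (hχ : ∀ a : A, χ (star a) = conj (χ a)) :
    (Complex.normSq (χ α) : ℂ) + Complex.normSq (χ β) + χ z ^ 2 = 1 := by
  have := congrArg χ h.2.2.2.2.2.2.2
  rwa [map_add, map_add, map_mul_star_self_of_map_star hχ, map_mul_star_self_of_map_star hχ,
    map_pow, map_one] at this

theorem normSq_map_add_normSq_mul_normSq_map (h : S4Rel q α β z)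
    (hχ : ∀ a : A, χ (star a) = conj (χ a)) :
    (Complex.normSq (χ α) : ℂ) + Complex.normSq q * Complex.normSq (χ β) + χ z ^ 2 = 1 := by
  have := congrArg χ h.2.2.2.2.2.2.1
  rwa [map_add, map_add, map_smul, map_star_mul_self_of_map_star hχ,
    map_star_mul_self_of_map_star hχ, map_pow, map_one, Complex.mul_conj, smul_eq_mul] at this

/-- The two sphere relations differ by `(1 - |q|²) β*β`, so a character kills `β` unless `|q| = 1`. -/
theorem map_beta_eq_zero (h : S4Rel q α β z) (hχ : ∀ a : A, χ (star a) = conj (χ a))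
    (hq : ‖q‖ ≠ 1) : χ β = 0 := by
  have hsub : (1 - Complex.normSq q : ℂ) * Complex.normSq (χ β) = 0 := by
    linear_combination h.normSq_map_add_normSq_map hχ - h.normSq_map_add_normSq_mul_normSq_map hχ
  have hq' : (1 - Complex.normSq q : ℂ) ≠ 0 := by
    rw [sub_ne_zero, ne_comm, ← Complex.sq_norm]
    exact_mod_cast (pow_eq_one_iff_of_nonneg (norm_nonneg q) two_ne_zero).not.mpr hq
  simpa [hq'] using hsub

end S4Rel

theorem s4_q_characters_general {A : Type*} [Ring A] [Algebra ℂ A] [StarRing A] [StarModule ℂ A]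
    (q : ℂ) (h1 : ‖q‖ < 1)
    (α β z : A) (h : S4Rel q α β z)
    (χ : A →ₐ[ℂ] ℂ) (hχ : ∀ a : A, χ (star a) = (starRingEnd ℂ) (χ a)) :
    χ β = 0 ∧ (starRingEnd ℂ) (χ z) = χ z ∧
      ((‖χ α‖ : ℝ) : ℂ) ^ 2 + (χ z) ^ 2 = 1 := by
  have hβ : χ β = 0 := h.map_beta_eq_zero hχ h1.ne
  refine ⟨hβ, conj_map_of_map_star hχ h.1, ?_⟩
  have hα := h.normSq_map_add_normSq_map hχ
  rwa [hβ, map_zero, Complex.ofReal_zero, add_zero, ← Complex.sq_norm, Complex.ofReal_pow] at hα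

/-- Let `0 < |q| < 1` and let `(α, β, z)` satisfy (s4rel) with parameter
`q` in a unital complex *-algebra `A`.  Any character `χ` of `A` (unital ℂ-algebra
homomorphism with `χ(a*) = conj(χ(a))`) satisfies `χ(β) = 0`, `χ(z)` real, and
`|χ(α)|² + χ(z)² = 1`. -/
theorem s4_q_characters {A : Type*} [Ring A] [Algebra ℂ A] [StarRing A] [StarModule ℂ A]
    (q : ℂ) (h0 : 0 < ‖q‖) (h1 : ‖q‖ < 1)
    (α β z : A) (h : S4Rel q α β z)
    (χ : A →ₐ[ℂ] ℂ) (hχ : ∀ a : A, χ (star a) = (starRingEnd ℂ) (χ a)) :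
    χ β = 0 ∧ (starRingEnd ℂ) (χ z) = χ z ∧
      ((‖χ α‖ : ℝ) : ℂ) ^ 2 + (χ z) ^ 2 = 1 :=
  s4_q_characters_general q h1 α β z h χ hχ
end

section
/- Let A be a unital *-algebra over ℂ, q ∈ ℂ, and α, β, z ∈ A satisfying the relations (s4rel) with parameter q; let e ∈ Mat₄(A) be the associated projection matrix. Then in A ⊗ Ā ⊗ Ā one has ch₁(e) = (1/8)·(1 − |q|²)·[ z ⊗ p(β) ⊗ p(β*) − z ⊗ p(β*) ⊗ p(β) + β* ⊗ p(z) ⊗ p(β) − β* ⊗ p(β) ⊗ p(z) + β ⊗ p(β*) ⊗ p(z) − β ⊗ p(z) ⊗ p(β*) ], where |q|² = q·conj(q). -/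
open scoped TensorProduct

/-- For `(α, β, z)` satisfying (s4rel) with parameter `q` and `e` the
associated projection matrix, in `A ⊗ Ā ⊗ Ā` (with `Ā = A/ℂ·1`, quotient map `p`) one
has `ch₁(e) = (1/8)(1-|q|²)[ z⊗p(β)⊗p(β*) - z⊗p(β*)⊗p(β) + β*⊗p(z)⊗p(β)
- β*⊗p(β)⊗p(z) + β⊗p(β*)⊗p(z) - β⊗p(z)⊗p(β*) ]`. -/
theorem ch1_formula {A : Type} [Ring A] [Algebra ℂ A] [StarRing A] [StarModule ℂ A]
    (q : ℂ) (α β z : A) (h : S4Rel q α β z)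
    (e : Matrix (Fin 4) (Fin 4) A)
    (he : e = (2⁻¹ : ℂ) •
      !![1 + z, 0, α, β;
         0, 1 + z, -(q • star β), star α;
         star α, -((starRingEnd ℂ) q • β), 1 - z, 0;
         star β, α, 0, 1 - z])
    (p : A →ₗ[ℂ] A ⧸ Submodule.span ℂ ({1} : Set A))
    (hp : p = (Submodule.span ℂ ({1} : Set A)).mkQ) :
    (∑ i : Fin 4, ∑ j : Fin 4, ∑ k : Fin 4,
        ((e - (2⁻¹ : ℂ) • 1) i j) ⊗ₜ[ℂ] (p (e j k) ⊗ₜ[ℂ] p (e k i)))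
      = (8⁻¹ * (1 - q * (starRingEnd ℂ) q)) •
        (z ⊗ₜ[ℂ] (p β ⊗ₜ[ℂ] p (star β)) - z ⊗ₜ[ℂ] (p (star β) ⊗ₜ[ℂ] p β)
          + star β ⊗ₜ[ℂ] (p z ⊗ₜ[ℂ] p β) - star β ⊗ₜ[ℂ] (p β ⊗ₜ[ℂ] p z)
          + β ⊗ₜ[ℂ] (p (star β) ⊗ₜ[ℂ] p z) - β ⊗ₜ[ℂ] (p z ⊗ₜ[ℂ] p (star β))) := by
  subst he hp
  have h1 : (Submodule.span ℂ ({1} : Set A)).mkQ (1 : A) = 0 := by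
    simp [Submodule.Quotient.mk_eq_zero, Submodule.mem_span_singleton_self]
  simp only [Fin.sum_univ_four, Matrix.sub_apply, Matrix.smul_apply, Matrix.one_apply,
    Matrix.cons_val', Matrix.cons_val_zero, Matrix.cons_val_one, Matrix.head_cons,
    Matrix.empty_val', Matrix.cons_val_fin_one, Matrix.head_fin_const, Matrix.of_apply,
    Matrix.cons_val_two, Matrix.cons_val_three, Matrix.tail_cons, Matrix.head_fin_const,
    Fin.isValue, ite_true, ite_false, show ((0:Fin 4) ≠ 1) by decide,
    show ((0:Fin 4) ≠ 2) by decide, show ((0:Fin 4) ≠ 3) by decide,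
    show ((1:Fin 4) ≠ 0) by decide, show ((1:Fin 4) ≠ 2) by decide,
    show ((1:Fin 4) ≠ 3) by decide, show ((2:Fin 4) ≠ 0) by decide,
    show ((2:Fin 4) ≠ 1) by decide, show ((2:Fin 4) ≠ 3) by decide,
    show ((3:Fin 4) ≠ 0) by decide, show ((3:Fin 4) ≠ 1) by decide,
    show ((3:Fin 4) ≠ 2) by decide, if_neg, if_pos]
  simp only [map_add, map_sub, map_neg, map_smul, h1, zero_add, add_zero, sub_zero, zero_sub,
    smul_add, smul_sub, smul_neg, smul_zero, map_zero, neg_zero]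
  simp only [TensorProduct.tmul_add, TensorProduct.add_tmul, TensorProduct.tmul_sub,
    TensorProduct.sub_tmul, TensorProduct.tmul_neg, TensorProduct.neg_tmul,
    TensorProduct.tmul_smul, ← TensorProduct.smul_tmul', TensorProduct.tmul_zero,
    TensorProduct.zero_tmul, smul_smul, smul_add, smul_sub, smul_neg, smul_zero,
    add_zero, zero_add, sub_zero, zero_sub, neg_neg]
  module
end

section
/- (Proposition 1) Let q ∈ ℂ with q ≠ 0, let A_q be the algebra of the quantum 4-sphere S⁴_q, and let e ∈ Mat₄(A_q) be the instanton projection. Then the first Chern–Connes class ch₁(e) vanishes in A_q ⊗ Ā_q ⊗ Ā_q if and only if |q| = 1. -/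
open scoped TensorProduct

open scoped ComplexConjugate

section CyclicTensor

variable {R A M n : Type*} [CommRing R] [AddCommGroup M] [Module R M] [Fintype n]

def cyclicTensor [AddCommGroup A] [Module R A] (p : A →ₗ[R] M) (N : Matrix n n A) :
    A ⊗[R] (M ⊗[R] M) :=
  ∑ i, ∑ j, ∑ k, N i j ⊗ₜ (p (N j k) ⊗ₜ p (N k i))

lemma cyclicTensor_smul [AddCommGroup A] [Module R A] (p : A →ₗ[R] M) (c : R)
    (N : Matrix n n A) : cyclicTensor p (c • N) = c ^ 3 • cyclicTensor p N := by
  simp only [cyclicTensor, Matrix.smul_apply, map_smul, TensorProduct.tmul_smul,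
    ← TensorProduct.smul_tmul', Finset.smul_sum, smul_smul]
  congr! 4
  ring

lemma sum_tmul_eq_cyclicTensor_sub_smul_one [DecidableEq n] [Ring A] [Algebra R A]
    (p : A →ₗ[R] M) (hp : p 1 = 0) (e : Matrix n n A) (c : R) :
    ∑ i, ∑ j, ∑ k, (e - c • 1) i j ⊗ₜ (p (e j k) ⊗ₜ p (e k i)) =
      cyclicTensor p (e - c • 1) := by
  have hpe (j k : n) : p ((e - c • 1) j k) = p (e j k) := by
    rw [Matrix.sub_apply, map_sub, Matrix.smul_apply, map_smul, Matrix.one_apply]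
    split_ifs <;> simp [hp]
  simp only [cyclicTensor, hpe]

def cyclicAntisymm [AddCommGroup A] [Module R A] (p : A →ₗ[R] M) (x y w : A) :
    A ⊗[R] (M ⊗[R] M) :=
  x ⊗ₜ (p y ⊗ₜ p w - p w ⊗ₜ p y) + y ⊗ₜ (p w ⊗ₜ p x - p x ⊗ₜ p w) +
    w ⊗ₜ (p x ⊗ₜ p y - p y ⊗ₜ p x)

end CyclicTensor

section Instanton

variable {A M : Type*} [AddCommGroup M] [Module ℂ M]

def instantonSymmetry [AddCommGroup A] [Module ℂ A] [Star A] (q : ℂ) (α β z : A) :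
    Matrix (Fin 4) (Fin 4) A :=
  !![z, 0, α, β;
     0, z, -(q • star β), star α;
     star α, -(conj q • β), -z, 0;
     star β, α, 0, -z]

lemma instanton_sub_half_smul_one [Ring A] [Algebra ℂ A] [Star A] (q : ℂ) (α β z : A) :
    (2⁻¹ : ℂ) •
      !![1 + z, 0, α, β;
         0, 1 + z, -(q • star β), star α;
         star α, -((starRingEnd ℂ) q • β), 1 - z, 0;
         star β, α, 0, 1 - z] - (2⁻¹ : ℂ) • 1 =
      (2⁻¹ : ℂ) • instantonSymmetry q α β z := by
  rw [← smul_sub]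
  congr 1
  ext i j
  fin_cases i <;> fin_cases j <;> simp [instantonSymmetry]

lemma cyclicTensor_instantonSymmetry [AddCommGroup A] [Module ℂ A] [Star A]
    (p : A →ₗ[ℂ] M) (q : ℂ) (α β z : A) :
    cyclicTensor p (instantonSymmetry q α β z) =
      (1 - q * conj q) • cyclicAntisymm p z β (star β) := by
  simp only [cyclicTensor, cyclicAntisymm, instantonSymmetry, Fin.sum_univ_four,
    Matrix.of_apply, Matrix.cons_val', Matrix.cons_val_zero, Matrix.cons_val_one,
    Matrix.cons_val_two, Matrix.cons_val_three, Matrix.head_cons, Matrix.tail_cons,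
    Matrix.empty_val', Matrix.cons_val_fin_one, Matrix.head_fin_const, map_neg, map_smul,
    map_zero, TensorProduct.tmul_zero, TensorProduct.zero_tmul, TensorProduct.tmul_neg,
    TensorProduct.neg_tmul, TensorProduct.tmul_smul, ← TensorProduct.smul_tmul',
    TensorProduct.tmul_sub]
  match_scalars <;> ring

end Instanton

/-- `ℂ³` with pointwise product and the star `(x₀, x₁, x₂)* = (x̄₁, x̄₀, x̄₂)`: there
`b = (1, 0, 0)` has `b* b = b b* = 0`, while `1, b, b*` are linearly independent. -/
def SwapC3 : Type := Fin 3 → ℂ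

namespace SwapC3

instance : CommRing SwapC3 := inferInstanceAs (CommRing (Fin 3 → ℂ))
instance : Algebra ℂ SwapC3 := inferInstanceAs (Algebra ℂ (Fin 3 → ℂ))

instance : StarRing SwapC3 where
  star x i := conj (x (Equiv.swap 0 1 i))
  star_involutive x := funext fun _ => by simp
  star_mul x y := funext fun _ => by
    change conj (x _ * y _) = conj (y _) * conj (x _)
    rw [map_mul, mul_comm]
  star_add x y := funext fun _ => map_add conj (x _) (y _)

instance : StarModule ℂ SwapC3 where
  star_smul c x := funext fun _ => map_mul conj c (x _)

def coord (i : Fin 3) : SwapC3 →ₗ[ℂ] ℂ := LinearMap.proj i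

@[ext] lemma ext {x y : SwapC3} (h : ∀ i, coord i x = coord i y) : x = y := funext h

@[simp] lemma coord_one (i : Fin 3) : coord i 1 = 1 := rfl
@[simp] lemma coord_mul (i : Fin 3) (x y : SwapC3) : coord i (x * y) = coord i x * coord i y := rfl

lemma coord_star (i : Fin 3) (x : SwapC3) :
    coord i (star x) = conj (coord (Equiv.swap 0 1 i) x) := rfl

def b : SwapC3 := ![1, 0, 0]

@[simp] lemma coord_b (i : Fin 3) : coord i b = if i = 0 then 1 else 0 := by
  fin_cases i <;> rfl

@[simp] lemma coord_star_b (i : Fin 3) : coord i (star b) = if i = 1 then 1 else 0 := by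
  fin_cases i <;> simp [coord_star, Equiv.swap_apply_of_ne_of_ne]

lemma star_b_mul_b : star b * b = 0 := by
  ext i; fin_cases i <;> simp

lemma b_mul_star_b : b * star b = 0 := by
  ext i; fin_cases i <;> simp

end SwapC3

lemma s4Rel_zero_one {B : Type*} [Ring B] [Algebra ℂ B] [StarRing B] [StarModule ℂ B]
    (q : ℂ) {b : B} (h₁ : star b * b = 0) (h₂ : b * star b = 0) : S4Rel q 0 b 1 := by
  refine ⟨star_one B, by simp, by simp, by simp, by simp, h₂.trans h₁.symm, ?_, ?_⟩ <;>
    simp [h₁, h₂]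

lemma cyclicAntisymm_ne_zero {K A M : Type*} [Field K] [AddCommGroup A] [Module K A]
    [AddCommGroup M] [Module K M] {p : A →ₗ[K] M} {x y w : A} (f : A →ₗ[K] K)
    (g h : M →ₗ[K] K) (hgx : g (p x) = 0) (hhx : h (p x) = 0) (hfx : f x ≠ 0)
    (hyw : g (p y) * h (p w) ≠ g (p w) * h (p y)) : cyclicAntisymm p x y w ≠ 0 := by
  intro hW
  have hL := congrArg ((TensorProduct.lid K K).toLinearMap ∘ₗ
    TensorProduct.map f ((TensorProduct.lid K K).toLinearMap ∘ₗ TensorProduct.map g h)) hW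
  simp [cyclicAntisymm, hgx, hhx] at hL
  exact hL.elim hfx (sub_ne_zero.mpr hyw)

lemma cyclicAntisymm_mkQ_ne_zero {q : ℂ} {A : Type} [Ring A] [Algebra ℂ A] [StarRing A]
    [StarModule ℂ A] {α β z : A} (h : IsUniversalS4 q A α β z) :
    cyclicAntisymm (ℂ ∙ (1 : A)).mkQ z β (star β) ≠ 0 := by
  obtain ⟨φ, ⟨-, hφβ, hφz⟩, -⟩ :=
    h.2 SwapC3 0 SwapC3.b 1 (s4Rel_zero_one q SwapC3.star_b_mul_b SwapC3.b_mul_star_b)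
  let φₗ : A →ₗ[ℂ] SwapC3 := φ.toAlgHom.toLinearMap
  let g (i : Fin 3) : A ⧸ ℂ ∙ (1 : A) →ₗ[ℂ] ℂ :=
    Submodule.liftQSpanSingleton 1 ((SwapC3.coord i - SwapC3.coord 2) ∘ₗ φₗ) (by simp [φₗ])
  apply cyclicAntisymm_ne_zero (SwapC3.coord 2 ∘ₗ φₗ) (g 0) (g 1) <;>
    simp [g, φₗ, Submodule.liftQSpanSingleton_apply, map_star, hφβ, hφz]

theorem ch1_vanishes_iff_modulus_one_general (q : ℂ)
    (A : Type) [Ring A] [Algebra ℂ A] [StarRing A] [StarModule ℂ A]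
    (α β z : A) (h : IsUniversalS4 q A α β z)
    (e : Matrix (Fin 4) (Fin 4) A)
    (he : e = (2⁻¹ : ℂ) •
      !![1 + z, 0, α, β;
         0, 1 + z, -(q • star β), star α;
         star α, -((starRingEnd ℂ) q • β), 1 - z, 0;
         star β, α, 0, 1 - z])
    (p : A →ₗ[ℂ] A ⧸ Submodule.span ℂ ({1} : Set A))
    (hp : p = (Submodule.span ℂ ({1} : Set A)).mkQ) :
    (∑ i : Fin 4, ∑ j : Fin 4, ∑ k : Fin 4,
        ((e - (2⁻¹ : ℂ) • 1) i j) ⊗ₜ[ℂ] (p (e j k) ⊗ₜ[ℂ] p (e k i))) = 0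
      ↔ ‖q‖ = 1 := by
  subst he hp
  rw [sum_tmul_eq_cyclicTensor_sub_smul_one _ (by simp), instanton_sub_half_smul_one,
    cyclicTensor_smul, cyclicTensor_instantonSymmetry, smul_smul, smul_eq_zero,
    or_iff_left (cyclicAntisymm_mkQ_ne_zero h), mul_eq_zero, or_iff_right (by norm_num),
    sub_eq_zero, eq_comm, Complex.mul_conj, Complex.normSq_eq_norm_sq]
  exact_mod_cast pow_eq_one_iff_of_nonneg (norm_nonneg q) two_ne_zero

/-- Proposition 1: For `q ≠ 0` and `A_q` the algebra of the quantum
4-sphere with instanton projection `e`, the first Chern–Connes class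
`ch₁(e) = Σ (e-½)_{ij} ⊗ p(e_{jk}) ⊗ p(e_{ki}) ∈ A_q ⊗ Ā_q ⊗ Ā_q` vanishes iff
`|q| = 1`. -/
theorem ch1_vanishes_iff_modulus_one (q : ℂ) (hq : q ≠ 0)
    (A : Type) [Ring A] [Algebra ℂ A] [StarRing A] [StarModule ℂ A]
    (α β z : A) (h : IsUniversalS4 q A α β z)
    (e : Matrix (Fin 4) (Fin 4) A)
    (he : e = (2⁻¹ : ℂ) •
      !![1 + z, 0, α, β;
         0, 1 + z, -(q • star β), star α;
         star α, -((starRingEnd ℂ) q • β), 1 - z, 0;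
         star β, α, 0, 1 - z])
    (p : A →ₗ[ℂ] A ⧸ Submodule.span ℂ ({1} : Set A))
    (hp : p = (Submodule.span ℂ ({1} : Set A)).mkQ) :
    (∑ i : Fin 4, ∑ j : Fin 4, ∑ k : Fin 4,
        ((e - (2⁻¹ : ℂ) • 1) i j) ⊗ₜ[ℂ] (p (e j k) ⊗ₜ[ℂ] p (e k i))) = 0
      ↔ ‖q‖ = 1 :=
  ch1_vanishes_iff_modulus_one_general q A α β z h e he p hp
end

section
/- Let A be a unital *-algebra over ℂ, q ∈ ℂ, and α, β, z ∈ A satisfying the relations (s4rel) with parameter q; let e ∈ Mat₄(A) be the associated projection matrix. Let Y = Σ_{i₀,…,i₄} (e − (1/2)·1)_{i₀i₁} ⊗ e_{i₁i₂} ⊗ e_{i₂i₃} ⊗ e_{i₃i₄} ⊗ e_{i₄i₀} ∈ A^{⊗5} be the unreduced lift of ch₂(e). Then the reduced Hochschild boundary (id ⊗ p ⊗ p ⊗ p)(b(Y)) ∈ A ⊗ Ā ⊗ Ā ⊗ Ā equals (1/16)·(1 − |q|²)·[ 1 ⊗ p(z) ⊗ p(β) ⊗ p(β*) − 1 ⊗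 p(z) ⊗ p(β*) ⊗ p(β) + 1 ⊗ p(β) ⊗ p(β*) ⊗ p(z) − 1 ⊗ p(β) ⊗ p(z) ⊗ p(β*) + 1 ⊗ p(β*) ⊗ p(z) ⊗ p(β) − 1 ⊗ p(β*) ⊗ p(β) ⊗ p(z) ], where |q|² = q·conj(q). -/
set_option synthInstance.maxHeartbeats 1000000
set_option maxHeartbeats 4000000
set_option maxRecDepth 8000


open scoped TensorProduct

/-- For `(α, β, z)` satisfying (s4rel) and `e` the associated projection,
the reduced Hochschild boundary `(id ⊗ p ⊗ p ⊗ p)(b(Y))` of the unreduced lift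
`Y = Σ (e-½)_{i₀i₁} ⊗ e_{i₁i₂} ⊗ e_{i₂i₃} ⊗ e_{i₃i₄} ⊗ e_{i₄i₀}` of `ch₂(e)` equals
`(1/16)(1-|q|²)[ 1⊗p(z)⊗p(β)⊗p(β*) - 1⊗p(z)⊗p(β*)⊗p(β) + 1⊗p(β)⊗p(β*)⊗p(z)
- 1⊗p(β)⊗p(z)⊗p(β*) + 1⊗p(β*)⊗p(z)⊗p(β) - 1⊗p(β*)⊗p(β)⊗p(z) ]`. -/
theorem b_ch2_formula {A : Type} [Ring A] [Algebra ℂ A] [StarRing A] [StarModule ℂ A]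
    (q : ℂ) (α β z : A) (h : S4Rel q α β z)
    (e : Matrix (Fin 4) (Fin 4) A)
    (he : e = (2⁻¹ : ℂ) •
      !![1 + z, 0, α, β;
         0, 1 + z, -(q • star β), star α;
         star α, -((starRingEnd ℂ) q • β), 1 - z, 0;
         star β, α, 0, 1 - z])
    (p : A →ₗ[ℂ] A ⧸ Submodule.span ℂ ({1} : Set A))
    (hp : p = (Submodule.span ℂ ({1} : Set A)).mkQ) :
    TensorProduct.map (LinearMap.id : A →ₗ[ℂ] A)
        (TensorProduct.map p (TensorProduct.map p p))
      (∑ i₀ : Fin 4, ∑ i₁ : Fin 4, ∑ i₂ : Fin 4, ∑ i₃ : Fin 4, ∑ i₄ : Fin 4,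
        (((e - (2⁻¹ : ℂ) • 1) i₀ i₁ * e i₁ i₂) ⊗ₜ[ℂ] (e i₂ i₃ ⊗ₜ[ℂ] (e i₃ i₄ ⊗ₜ[ℂ] e i₄ i₀))
          - ((e - (2⁻¹ : ℂ) • 1) i₀ i₁) ⊗ₜ[ℂ] ((e i₁ i₂ * e i₂ i₃) ⊗ₜ[ℂ] (e i₃ i₄ ⊗ₜ[ℂ] e i₄ i₀))
          + ((e - (2⁻¹ : ℂ) • 1) i₀ i₁) ⊗ₜ[ℂ] (e i₁ i₂ ⊗ₜ[ℂ] ((e i₂ i₃ * e i₃ i₄) ⊗ₜ[ℂ] e i₄ i₀))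
          - ((e - (2⁻¹ : ℂ) • 1) i₀ i₁) ⊗ₜ[ℂ] (e i₁ i₂ ⊗ₜ[ℂ] (e i₂ i₃ ⊗ₜ[ℂ] (e i₃ i₄ * e i₄ i₀)))
          + (e i₄ i₀ * (e - (2⁻¹ : ℂ) • 1) i₀ i₁) ⊗ₜ[ℂ] (e i₁ i₂ ⊗ₜ[ℂ] (e i₂ i₃ ⊗ₜ[ℂ] e i₃ i₄))))
      = (16⁻¹ * (1 - q * (starRingEnd ℂ) q)) •
        ((1 : A) ⊗ₜ[ℂ] (p z ⊗ₜ[ℂ] (p β ⊗ₜ[ℂ] p (star β)))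
          - (1 : A) ⊗ₜ[ℂ] (p z ⊗ₜ[ℂ] (p (star β) ⊗ₜ[ℂ] p β))
          + (1 : A) ⊗ₜ[ℂ] (p β ⊗ₜ[ℂ] (p (star β) ⊗ₜ[ℂ] p z))
          - (1 : A) ⊗ₜ[ℂ] (p β ⊗ₜ[ℂ] (p z ⊗ₜ[ℂ] p (star β)))
          + (1 : A) ⊗ₜ[ℂ] (p (star β) ⊗ₜ[ℂ] (p z ⊗ₜ[ℂ] p β))
          - (1 : A) ⊗ₜ[ℂ] (p (star β) ⊗ₜ[ℂ] (p β ⊗ₜ[ℂ] p z))) := by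
  obtain ⟨h1, h2, h3, h4, h5, h6, h7, h8⟩ := h
  have hp1 : p 1 = 0 := by
    rw [hp]
    exact (Submodule.Quotient.mk_eq_zero _).mpr (Submodule.mem_span_singleton_self 1)
  -- idempotence of e
  have hee : ∀ i j : Fin 4, (∑ k, e i k * e k j) = e i j := by
    subst he
    have h2s : z * star α = star α * z := by
      have := congrArg star h2
      rw [star_mul, star_mul, h1] at this
      exact this.symm
    have h3s : z * star β = star β * z := by
      have := congrArg star h3
      rw [star_mul, star_mul, h1] at this
      exact this.symm
    have h4s : star α * star β = q • (star β * star α) := by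
      have := congrArg star h4
      simpa [star_mul, star_smul] using this
    have h5s : star α * β = (starRingEnd ℂ) q • (β * star α) := by
      have := congrArg star h5
      simpa [star_mul, star_smul] using this
    have hzz : z * z = 1 - (star α * α + (q * (starRingEnd ℂ) q) • (star β * β)) := by
      rw [← sq]; exact eq_sub_of_add_eq' h7
    have haa : α * star α = star α * α + (q * (starRingEnd ℂ) q) • (star β * β) - star β * β := by
      have e8 : α * star α + star β * β + z ^ 2 = 1 := by rw [← h6]; exact h8
      exact eq_sub_of_add_eq (add_right_cancel (e8.trans h7.symm))
    intro i j
    fin_cases i <;> fin_cases j <;>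
      simp only [Fin.sum_univ_four, Fin.zero_eta, Fin.mk_one, Fin.reduceFinMk,
        Matrix.smul_apply, Matrix.cons_val', Matrix.cons_val_zero,
        Matrix.cons_val_one, Matrix.head_cons, Matrix.empty_val', Matrix.cons_val_fin_one,
        Matrix.head_fin_const, Matrix.cons_val_two, Matrix.cons_val_three, Matrix.tail_cons,
        Matrix.of_apply, Fin.isValue] <;>
      simp only [smul_mul_smul_comm, smul_mul_assoc, mul_smul_comm, neg_mul, mul_neg, neg_neg,
        smul_neg, mul_add, add_mul, mul_sub, sub_mul, mul_one, one_mul, mul_zero, zero_mul,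
        add_zero, zero_add, smul_smul, smul_zero, neg_zero, sub_zero, zero_sub,
        h2, h3, h2s, h3s, h4, h5, h4s, h5s, h6, hzz, haa] <;>
      module
  have hE : e * e = e := by
    ext i j; rw [Matrix.mul_apply]; exact hee i j
  have he'e : ∀ i j : Fin 4, (∑ k, (e - (2⁻¹ : ℂ) • 1) i k * e k j) = (2⁻¹ : ℂ) • e i j := by
    intro i j
    have h' : (e - (2⁻¹ : ℂ) • 1) * e = (2⁻¹ : ℂ) • e := by
      rw [sub_mul, Matrix.smul_mul, one_mul, hE]; module
    calc (∑ k, (e - (2⁻¹ : ℂ) • 1) i k * e k j) = ((e - (2⁻¹ : ℂ) • 1) * e) i j :=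
          (Matrix.mul_apply).symm
      _ = ((2⁻¹ : ℂ) • e) i j := by rw [h']
      _ = (2⁻¹ : ℂ) • e i j := rfl
  have hee' : ∀ i j : Fin 4, (∑ k, e i k * (e - (2⁻¹ : ℂ) • 1) k j) = (2⁻¹ : ℂ) • e i j := by
    intro i j
    have h' : e * (e - (2⁻¹ : ℂ) • 1) = (2⁻¹ : ℂ) • e := by
      rw [mul_sub, Matrix.mul_smul, mul_one, hE]; module
    calc (∑ k, e i k * (e - (2⁻¹ : ℂ) • 1) k j) = (e * (e - (2⁻¹ : ℂ) • 1)) i j :=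
          (Matrix.mul_apply).symm
      _ = ((2⁻¹ : ℂ) • e) i j := by rw [h']
      _ = (2⁻¹ : ℂ) • e i j := rfl
  -- generic sum lemmas on the target module
  have hsum_sub : ∀ (f g : Fin 4 → A ⊗[ℂ] ((A ⧸ Submodule.span ℂ ({1} : Set A)) ⊗[ℂ]
      ((A ⧸ Submodule.span ℂ ({1} : Set A)) ⊗[ℂ] (A ⧸ Submodule.span ℂ ({1} : Set A))))),
      (∑ i, (f i - g i)) = ∑ i, f i - ∑ i, g i := by
    intro f g; simp only [Fin.sum_univ_four]; abel
  have hrot3 : ∀ (G : Fin 4 → Fin 4 → Fin 4 →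
      A ⊗[ℂ] ((A ⧸ Submodule.span ℂ ({1} : Set A)) ⊗[ℂ]
        ((A ⧸ Submodule.span ℂ ({1} : Set A)) ⊗[ℂ] (A ⧸ Submodule.span ℂ ({1} : Set A))))),
      (∑ c : Fin 4, ∑ d : Fin 4, ∑ a : Fin 4, G c d a)
        = ∑ a : Fin 4, ∑ c : Fin 4, ∑ d : Fin 4, G c d a := by
    intro G
    calc (∑ c : Fin 4, ∑ d : Fin 4, ∑ a : Fin 4, G c d a)
        = ∑ c : Fin 4, ∑ a : Fin 4, ∑ d : Fin 4, G c d a :=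
          Finset.sum_congr rfl fun c _ => Finset.sum_comm
      _ = ∑ a : Fin 4, ∑ c : Fin 4, ∑ d : Fin 4, G c d a := Finset.sum_comm
  -- the five boundary pieces
  have hA1 : (∑ i₀ : Fin 4, ∑ i₁ : Fin 4, ∑ i₂ : Fin 4, ∑ i₃ : Fin 4, ∑ i₄ : Fin 4,
      ((e - (2⁻¹ : ℂ) • 1) i₀ i₁ * e i₁ i₂) ⊗ₜ[ℂ]
        (p (e i₂ i₃) ⊗ₜ[ℂ] (p (e i₃ i₄) ⊗ₜ[ℂ] p (e i₄ i₀))))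
      = (2⁻¹ : ℂ) • ∑ a : Fin 4, ∑ b : Fin 4, ∑ c : Fin 4, ∑ d : Fin 4,
          e a b ⊗ₜ[ℂ] (p (e b c) ⊗ₜ[ℂ] (p (e c d) ⊗ₜ[ℂ] p (e d a))) := by
    rw [Finset.smul_sum]
    refine Finset.sum_congr rfl fun i₀ _ => ?_
    rw [Finset.smul_sum, Finset.sum_comm]
    refine Finset.sum_congr rfl fun i₂ _ => ?_
    rw [Finset.smul_sum, Finset.sum_comm]
    refine Finset.sum_congr rfl fun i₃ _ => ?_
    rw [Finset.smul_sum, Finset.sum_comm]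
    refine Finset.sum_congr rfl fun i₄ _ => ?_
    rw [← TensorProduct.sum_tmul, he'e, TensorProduct.smul_tmul']
  have hA2 : (∑ i₀ : Fin 4, ∑ i₁ : Fin 4, ∑ i₂ : Fin 4, ∑ i₃ : Fin 4, ∑ i₄ : Fin 4,
      ((e - (2⁻¹ : ℂ) • 1) i₀ i₁) ⊗ₜ[ℂ]
        (p (e i₁ i₂ * e i₂ i₃) ⊗ₜ[ℂ] (p (e i₃ i₄) ⊗ₜ[ℂ] p (e i₄ i₀))))
      = ∑ a : Fin 4, ∑ b : Fin 4, ∑ c : Fin 4, ∑ d : Fin 4,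
          ((e - (2⁻¹ : ℂ) • 1) a b) ⊗ₜ[ℂ] (p (e b c) ⊗ₜ[ℂ] (p (e c d) ⊗ₜ[ℂ] p (e d a))) := by
    refine Finset.sum_congr rfl fun i₀ _ => ?_
    refine Finset.sum_congr rfl fun i₁ _ => ?_
    rw [Finset.sum_comm]
    refine Finset.sum_congr rfl fun i₃ _ => ?_
    rw [Finset.sum_comm]
    refine Finset.sum_congr rfl fun i₄ _ => ?_
    rw [← TensorProduct.tmul_sum, ← TensorProduct.sum_tmul, ← map_sum, hee]
  have hA3 : (∑ i₀ : Fin 4, ∑ i₁ : Fin 4, ∑ i₂ : Fin 4, ∑ i₃ : Fin 4, ∑ i₄ : Fin 4,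
      ((e - (2⁻¹ : ℂ) • 1) i₀ i₁) ⊗ₜ[ℂ]
        (p (e i₁ i₂) ⊗ₜ[ℂ] (p (e i₂ i₃ * e i₃ i₄) ⊗ₜ[ℂ] p (e i₄ i₀))))
      = ∑ a : Fin 4, ∑ b : Fin 4, ∑ c : Fin 4, ∑ d : Fin 4,
          ((e - (2⁻¹ : ℂ) • 1) a b) ⊗ₜ[ℂ] (p (e b c) ⊗ₜ[ℂ] (p (e c d) ⊗ₜ[ℂ] p (e d a))) := by
    refine Finset.sum_congr rfl fun i₀ _ => ?_
    refine Finset.sum_congr rfl fun i₁ _ => ?_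
    refine Finset.sum_congr rfl fun i₂ _ => ?_
    rw [Finset.sum_comm]
    refine Finset.sum_congr rfl fun i₄ _ => ?_
    rw [← TensorProduct.tmul_sum, ← TensorProduct.tmul_sum, ← TensorProduct.sum_tmul,
      ← map_sum, hee]
  have hA4 : (∑ i₀ : Fin 4, ∑ i₁ : Fin 4, ∑ i₂ : Fin 4, ∑ i₃ : Fin 4, ∑ i₄ : Fin 4,
      ((e - (2⁻¹ : ℂ) • 1) i₀ i₁) ⊗ₜ[ℂ]
        (p (e i₁ i₂) ⊗ₜ[ℂ] (p (e i₂ i₃) ⊗ₜ[ℂ] p (e i₃ i₄ * e i₄ i₀))))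
      = ∑ a : Fin 4, ∑ b : Fin 4, ∑ c : Fin 4, ∑ d : Fin 4,
          ((e - (2⁻¹ : ℂ) • 1) a b) ⊗ₜ[ℂ] (p (e b c) ⊗ₜ[ℂ] (p (e c d) ⊗ₜ[ℂ] p (e d a))) := by
    refine Finset.sum_congr rfl fun i₀ _ => ?_
    refine Finset.sum_congr rfl fun i₁ _ => ?_
    refine Finset.sum_congr rfl fun i₂ _ => ?_
    refine Finset.sum_congr rfl fun i₃ _ => ?_
    rw [← TensorProduct.tmul_sum, ← TensorProduct.tmul_sum, ← TensorProduct.tmul_sum,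
      ← map_sum, hee]
  have hA5 : (∑ i₀ : Fin 4, ∑ i₁ : Fin 4, ∑ i₂ : Fin 4, ∑ i₃ : Fin 4, ∑ i₄ : Fin 4,
      (e i₄ i₀ * (e - (2⁻¹ : ℂ) • 1) i₀ i₁) ⊗ₜ[ℂ]
        (p (e i₁ i₂) ⊗ₜ[ℂ] (p (e i₂ i₃) ⊗ₜ[ℂ] p (e i₃ i₄))))
      = (2⁻¹ : ℂ) • ∑ a : Fin 4, ∑ b : Fin 4, ∑ c : Fin 4, ∑ d : Fin 4,
          e a b ⊗ₜ[ℂ] (p (e b c) ⊗ₜ[ℂ] (p (e c d) ⊗ₜ[ℂ] p (e d a))) := by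
    rw [Finset.sum_comm]
    calc (∑ i₁ : Fin 4, ∑ i₀ : Fin 4, ∑ i₂ : Fin 4, ∑ i₃ : Fin 4, ∑ i₄ : Fin 4,
        (e i₄ i₀ * (e - (2⁻¹ : ℂ) • 1) i₀ i₁) ⊗ₜ[ℂ]
          (p (e i₁ i₂) ⊗ₜ[ℂ] (p (e i₂ i₃) ⊗ₜ[ℂ] p (e i₃ i₄))))
        = ∑ i₁ : Fin 4, ∑ i₂ : Fin 4, ∑ i₃ : Fin 4, ∑ i₄ : Fin 4,
            ((2⁻¹ : ℂ) • e i₄ i₁) ⊗ₜ[ℂ]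
              (p (e i₁ i₂) ⊗ₜ[ℂ] (p (e i₂ i₃) ⊗ₜ[ℂ] p (e i₃ i₄))) := by
          refine Finset.sum_congr rfl fun i₁ _ => ?_
          rw [Finset.sum_comm]
          refine Finset.sum_congr rfl fun i₂ _ => ?_
          rw [Finset.sum_comm]
          refine Finset.sum_congr rfl fun i₃ _ => ?_
          rw [Finset.sum_comm]
          refine Finset.sum_congr rfl fun i₄ _ => ?_
          rw [← TensorProduct.sum_tmul, hee']
      _ = ∑ i₁ : Fin 4, ∑ i₂ : Fin 4, ∑ i₃ : Fin 4, ∑ i₄ : Fin 4,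
            (2⁻¹ : ℂ) • (e i₄ i₁ ⊗ₜ[ℂ]
              (p (e i₁ i₂) ⊗ₜ[ℂ] (p (e i₂ i₃) ⊗ₜ[ℂ] p (e i₃ i₄)))) := by
          simp only [TensorProduct.smul_tmul']
      _ = (2⁻¹ : ℂ) • ∑ i₁ : Fin 4, ∑ i₂ : Fin 4, ∑ i₃ : Fin 4, ∑ i₄ : Fin 4,
            e i₄ i₁ ⊗ₜ[ℂ] (p (e i₁ i₂) ⊗ₜ[ℂ] (p (e i₂ i₃) ⊗ₜ[ℂ] p (e i₃ i₄))) := by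
          simp only [Finset.smul_sum]
      _ = (2⁻¹ : ℂ) • ∑ a : Fin 4, ∑ b : Fin 4, ∑ c : Fin 4, ∑ d : Fin 4,
          e a b ⊗ₜ[ℂ] (p (e b c) ⊗ₜ[ℂ] (p (e c d) ⊗ₜ[ℂ] p (e d a))) := by
          congr 1
          calc (∑ b : Fin 4, ∑ c : Fin 4, ∑ d : Fin 4, ∑ a : Fin 4,
              e a b ⊗ₜ[ℂ] (p (e b c) ⊗ₜ[ℂ] (p (e c d) ⊗ₜ[ℂ] p (e d a))))
              = ∑ b : Fin 4, ∑ a : Fin 4, ∑ c : Fin 4, ∑ d : Fin 4,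
                e a b ⊗ₜ[ℂ] (p (e b c) ⊗ₜ[ℂ] (p (e c d) ⊗ₜ[ℂ] p (e d a))) :=
                Finset.sum_congr rfl fun b _ => hrot3 _
            _ = _ := Finset.sum_comm
  -- splitting off the diagonal correction
  have hT : (∑ a : Fin 4, ∑ b : Fin 4, ∑ c : Fin 4, ∑ d : Fin 4,
      ((e - (2⁻¹ : ℂ) • 1) a b) ⊗ₜ[ℂ] (p (e b c) ⊗ₜ[ℂ] (p (e c d) ⊗ₜ[ℂ] p (e d a))))
      = (∑ a : Fin 4, ∑ b : Fin 4, ∑ c : Fin 4, ∑ d : Fin 4,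
          e a b ⊗ₜ[ℂ] (p (e b c) ⊗ₜ[ℂ] (p (e c d) ⊗ₜ[ℂ] p (e d a))))
        - (2⁻¹ : ℂ) • ∑ a : Fin 4, ∑ c : Fin 4, ∑ d : Fin 4,
            (1 : A) ⊗ₜ[ℂ] (p (e a c) ⊗ₜ[ℂ] (p (e c d) ⊗ₜ[ℂ] p (e d a))) := by
    have step1 : (∑ a : Fin 4, ∑ b : Fin 4, ∑ c : Fin 4, ∑ d : Fin 4,
        ((e - (2⁻¹ : ℂ) • 1) a b) ⊗ₜ[ℂ] (p (e b c) ⊗ₜ[ℂ] (p (e c d) ⊗ₜ[ℂ] p (e d a))))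
        = ∑ a : Fin 4, ∑ b : Fin 4, ∑ c : Fin 4, ∑ d : Fin 4,
            (e a b ⊗ₜ[ℂ] (p (e b c) ⊗ₜ[ℂ] (p (e c d) ⊗ₜ[ℂ] p (e d a)))
              - (if a = b then (2⁻¹ : ℂ) • ((1 : A) ⊗ₜ[ℂ]
                  (p (e b c) ⊗ₜ[ℂ] (p (e c d) ⊗ₜ[ℂ] p (e d a)))) else 0)) := by
      refine Finset.sum_congr rfl fun a _ => ?_
      refine Finset.sum_congr rfl fun b _ => ?_
      refine Finset.sum_congr rfl fun c _ => ?_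
      refine Finset.sum_congr rfl fun d _ => ?_
      rw [Matrix.sub_apply, TensorProduct.sub_tmul]
      congr 1
      by_cases hab : a = b
      · subst hab
        rw [if_pos rfl, Matrix.smul_apply, Matrix.one_apply_eq, TensorProduct.smul_tmul']
      · rw [if_neg hab, Matrix.smul_apply, Matrix.one_apply_ne hab, smul_zero,
          TensorProduct.zero_tmul]
    have hX : (∑ a : Fin 4, ∑ b : Fin 4, ∑ c : Fin 4, ∑ d : Fin 4,
        (if a = b then (2⁻¹ : ℂ) • ((1 : A) ⊗ₜ[ℂ]
          (p (e b c) ⊗ₜ[ℂ] (p (e c d) ⊗ₜ[ℂ] p (e d a)))) else 0))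
        = (2⁻¹ : ℂ) • ∑ a : Fin 4, ∑ c : Fin 4, ∑ d : Fin 4,
            (1 : A) ⊗ₜ[ℂ] (p (e a c) ⊗ₜ[ℂ] (p (e c d) ⊗ₜ[ℂ] p (e d a))) := by
      rw [Finset.smul_sum]
      refine Finset.sum_congr rfl fun a _ => ?_
      rw [Finset.smul_sum, Finset.sum_comm]
      refine Finset.sum_congr rfl fun c _ => ?_
      rw [Finset.smul_sum, Finset.sum_comm]
      refine Finset.sum_congr rfl fun d _ => ?_
      simp [Finset.sum_ite_eq]
    rw [step1]
    simp only [hsum_sub]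
    rw [hX]
  -- the final explicit computation
  have hfinal : ((2⁻¹ : ℂ) • ∑ a : Fin 4, ∑ c : Fin 4, ∑ d : Fin 4,
      (1 : A) ⊗ₜ[ℂ] (p (e a c) ⊗ₜ[ℂ] (p (e c d) ⊗ₜ[ℂ] p (e d a))))
      = (16⁻¹ * (1 - q * (starRingEnd ℂ) q)) •
        ((1 : A) ⊗ₜ[ℂ] (p z ⊗ₜ[ℂ] (p β ⊗ₜ[ℂ] p (star β)))
          - (1 : A) ⊗ₜ[ℂ] (p z ⊗ₜ[ℂ] (p (star β) ⊗ₜ[ℂ] p β))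
          + (1 : A) ⊗ₜ[ℂ] (p β ⊗ₜ[ℂ] (p (star β) ⊗ₜ[ℂ] p z))
          - (1 : A) ⊗ₜ[ℂ] (p β ⊗ₜ[ℂ] (p z ⊗ₜ[ℂ] p (star β)))
          + (1 : A) ⊗ₜ[ℂ] (p (star β) ⊗ₜ[ℂ] (p z ⊗ₜ[ℂ] p β))
          - (1 : A) ⊗ₜ[ℂ] (p (star β) ⊗ₜ[ℂ] (p β ⊗ₜ[ℂ] p z))) := by
    subst he
    simp only [Fin.sum_univ_four, Fin.zero_eta, Fin.mk_one, Fin.reduceFinMk,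
      Matrix.smul_apply, Matrix.cons_val', Matrix.cons_val_zero,
      Matrix.cons_val_one, Matrix.head_cons, Matrix.empty_val', Matrix.cons_val_fin_one,
      Matrix.head_fin_const, Matrix.cons_val_two, Matrix.cons_val_three, Matrix.tail_cons,
      Matrix.of_apply, Fin.isValue]
    simp only [map_smul, map_add, map_sub, map_neg, map_zero, hp1, zero_add, add_zero,
      zero_sub, sub_zero, smul_zero, neg_zero, neg_neg, smul_neg,
      TensorProduct.tmul_zero, TensorProduct.zero_tmul, TensorProduct.tmul_smul,
      TensorProduct.tmul_neg, TensorProduct.neg_tmul, ← TensorProduct.smul_tmul']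
    module
  -- assemble
  simp only [map_sum, map_sub, map_add, TensorProduct.map_tmul, LinearMap.id_coe, id_eq]
  simp only [hsum_sub, Finset.sum_add_distrib]
  rw [hA1, hA2, hA3, hA4, hA5, hT, ← hfinal]
  module
end
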